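/- arXiv:2307.16272 — 6 statements merged into one kernel-verified Lean document; each statement's English description precedes it below -/
import Mathlib

section
/- Let k be a field, let r ≥ 1, d ≥ 1, n ≥ 0 be integers, and let χ : ℕ^d → ℤ satisfy: 0 ≤ χ(a) ≤ r for all a, Σ_{a∈ℕ^d} χ(a) = n, and χ(a) ≥ χ(b) whenever a ≤ b componentwise. Fix a full flag of subspaces 0 = V₀ ⊆ V₁ ⊆ ⋯ ⊆ V_r = k^r with dim_k Vᵢ = i. Write R = k[x₁,…,x_d] and define E := {f ∈ R^r : for every a ∈ ℕ^d, the vector in k^r of coefficients of the monomial x^a in f lies in V_{r−χ(a)}}. Then E is an R-submodule of R^r, and the quotient R^r/E has k-dimension n. -/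
/-- Let `k` be a field, `r, d ≥ 1`, `n ≥ 0`, and let `χ : ℕ^d → ℤ` satisfy
`0 ≤ χ(a) ≤ r` for all `a`, `Σ_a χ(a) = n` (in particular `χ` has finite support), and
`χ(a) ≥ χ(b)` whenever `a ≤ b` componentwise.  Fix a full flag `0 = V₀ ⊆ V₁ ⊆ ⋯ ⊆ V_r = k^r`
with `dim_k Vᵢ = i`.  Write `R = k[x₁,…,x_d]` and define
`E := {f ∈ R^r : for every a ∈ ℕ^d, the coefficient vector of x^a in f lies in V_{r−χ(a)}}`.
Then `E` is an `R`-submodule of `R^r` and the quotient `R^r/E` has `k`-dimension `n`. -/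
theorem statement1 {k : Type} [Field k] {d r n : ℕ} (hd : 1 ≤ d) (hr : 1 ≤ r)
    (χ : (Fin d →₀ ℕ) → ℤ)
    (hbound : ∀ a, 0 ≤ χ a ∧ χ a ≤ (r : ℤ))
    (hfin : (Function.support χ).Finite)
    (hsum : ∑ᶠ a, χ a = (n : ℤ))
    (hmono : ∀ a b : Fin d →₀ ℕ, a ≤ b → χ b ≤ χ a)
    (V : ℕ → Submodule k (Fin r → k))
    (hV0 : V 0 = ⊥) (hVr : V r = ⊤)
    (hVle : ∀ i j : ℕ, i ≤ j → V i ≤ V j)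
    (hVdim : ∀ i ≤ r, Module.finrank k (V i) = i) :
    ∃ E : Submodule (MvPolynomial (Fin d) k) (Fin r → MvPolynomial (Fin d) k),
      (E : Set (Fin r → MvPolynomial (Fin d) k)) =
        {f : Fin r → MvPolynomial (Fin d) k |
          ∀ a : Fin d →₀ ℕ, (fun i => MvPolynomial.coeff a (f i)) ∈ V ((r : ℤ) - χ a).toNat} ∧
      Module.Finite k ((Fin r → MvPolynomial (Fin d) k) ⧸ E) ∧
      Module.finrank k ((Fin r → MvPolynomial (Fin d) k) ⧸ E) = n := by
  classical
  set N : (Fin d →₀ ℕ) → ℕ := fun a => ((r : ℤ) - χ a).toNat with hN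
  set E : Submodule (MvPolynomial (Fin d) k) (Fin r → MvPolynomial (Fin d) k) :=
    { carrier := {f | ∀ a : Fin d →₀ ℕ, (fun i => MvPolynomial.coeff a (f i)) ∈ V (N a)}
      add_mem' := by
        intro f g hf hg a
        have : (fun i => MvPolynomial.coeff a ((f + g) i)) =
            (fun i => MvPolynomial.coeff a (f i)) + (fun i => MvPolynomial.coeff a (g i)) := by
          funext i; simp [MvPolynomial.coeff_add]
        rw [this]
        exact (V (N a)).add_mem (hf a) (hg a)
      zero_mem' := by
        intro a
        have : (fun i => MvPolynomial.coeff a ((0 : Fin r → MvPolynomial (Fin d) k) i)) =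
            (0 : Fin r → k) := by funext i; simp
        rw [this]; exact (V (N a)).zero_mem
      smul_mem' := by
        intro c f hf a
        have : (fun i => MvPolynomial.coeff a ((c • f) i)) =
            ∑ x ∈ Finset.HasAntidiagonal.antidiagonal a,
              MvPolynomial.coeff x.1 c • (fun i => MvPolynomial.coeff x.2 (f i)) := by
          funext i
          simp [MvPolynomial.coeff_mul, Finset.sum_apply, smul_eq_mul]
        rw [this]
        refine Submodule.sum_mem _ ?_
        intro x hx
        refine Submodule.smul_mem _ _ (hVle _ _ ?_ (hf x.2))
        have hxa : x.1 + x.2 = a := Finset.HasAntidiagonal.mem_antidiagonal.mp hx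
        have hle : x.2 ≤ a := hxa ▸ le_add_self
        exact Int.toNat_le_toNat (by linarith [hmono x.2 a hle]) } with hE
  refine ⟨E, rfl, ?_⟩
  -- the finite index set
  set S := hfin.toFinset with hS
  -- quotient target
  let Q : {a // a ∈ S} → Type := fun a => (Fin r → k) ⧸ V (N a.1)
  let coeffMap : (Fin d →₀ ℕ) → (Fin r → MvPolynomial (Fin d) k) →ₗ[k] (Fin r → k) :=
    fun a => LinearMap.pi (fun i => (MvPolynomial.lcoeff k a).comp (LinearMap.proj i))
  let Φ : (Fin r → MvPolynomial (Fin d) k) →ₗ[k] ((a : {a // a ∈ S}) → Q a) :=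
    LinearMap.pi (fun a => (V (N a.1)).mkQ.comp (coeffMap a.1))
  have hVtop : ∀ a, a ∉ S → V (N a) = ⊤ := by
    intro a ha
    have h0 : χ a = 0 := by
      by_contra h
      exact ha (hfin.mem_toFinset.mpr h)
    have : N a = r := by simp [hN, h0]
    rw [this, hVr]
  have hker : LinearMap.ker Φ = E.restrictScalars k := by
    ext f
    simp only [LinearMap.mem_ker, Submodule.restrictScalars_mem]
    constructor
    · intro h a
      by_cases ha : a ∈ S
      · have := congrFun h ⟨a, ha⟩
        have h2 : (V (N a)).mkQ (coeffMap a f) = 0 := this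
        have h3 := (Submodule.Quotient.mk_eq_zero _).mp h2
        exact h3
      · rw [hVtop a ha]; trivial
    · intro h
      funext a
      exact (Submodule.Quotient.mk_eq_zero _).mpr (h a.1)
  have hsurj : Function.Surjective Φ := by
    intro g
    choose v hv using fun a : {a // a ∈ S} => (V (N a.1)).mkQ_surjective (g a)
    refine ⟨fun i => ∑ a ∈ S.attach, MvPolynomial.monomial a.1 (v a i), ?_⟩
    funext a
    have hco : (fun i => MvPolynomial.coeff a.1
        (∑ b ∈ S.attach, MvPolynomial.monomial b.1 (v b i))) = v a := by
      funext i
      rw [MvPolynomial.coeff_sum]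
      rw [Finset.sum_eq_single a]
      · simp
      · intro b _ hb
        rw [MvPolynomial.coeff_monomial, if_neg (by
          intro h; exact hb (Subtype.ext h))]
      · intro h; exact absurd (Finset.mem_attach _ _) h
    show (V (N a.1)).mkQ (coeffMap a.1 _) = g a
    have : coeffMap a.1 (fun i => ∑ b ∈ S.attach, MvPolynomial.monomial b.1 (v b i)) = v a := hco
    rw [this, hv]
  -- finiteness and dimension of each quotient
  haveI : ∀ a : {a // a ∈ S}, Module.Finite k (Q a) := fun a =>
    Module.Finite.quotient k _
  have hNle : ∀ a, N a ≤ r := by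
    intro a
    have := (hbound a).1
    simp only [hN]
    omega
  have hQdim : ∀ a : {a // a ∈ S}, Module.finrank k (Q a) = (χ a.1).toNat := by
    intro a
    have h1 := Submodule.finrank_quotient_add_finrank (V (N a.1))
    rw [hVdim _ (hNle a.1), show Module.finrank k (Fin r → k) = r by simp] at h1
    have hb := hbound a.1
    show Module.finrank k ((Fin r → k) ⧸ V (N a.1)) = (χ a.1).toNat
    simp only [hN] at h1 ⊢
    omega
  have hdim : Module.finrank k ((a : {a // a ∈ S}) → Q a) = n := by
    rw [Module.finrank_pi_fintype]
    have : ∑ a : {a // a ∈ S}, Module.finrank k (Q a) = ∑ a : {a // a ∈ S}, (χ a.1).toNat := by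
      exact Finset.sum_congr rfl (fun a _ => hQdim a)
    rw [this]
    rw [Finset.sum_coe_sort S (fun a => (χ a).toNat)]
    have hsum' : ∑ a ∈ S, χ a = (n : ℤ) := by
      rw [← hsum]
      exact (finsum_eq_sum χ hfin).symm
    have : ((∑ a ∈ S, (χ a).toNat : ℕ) : ℤ) = (n : ℤ) := by
      push_cast
      rw [← hsum']
      exact Finset.sum_congr rfl (fun a _ => Int.toNat_of_nonneg (hbound a).1)
    exact_mod_cast this
  -- assemble equivalences
  let e1 : ((Fin r → MvPolynomial (Fin d) k) ⧸ E.restrictScalars k) ≃ₗ[k]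
      ((Fin r → MvPolynomial (Fin d) k) ⧸ E) :=
    Submodule.Quotient.restrictScalarsEquiv k E
  let e2 : ((Fin r → MvPolynomial (Fin d) k) ⧸ E.restrictScalars k) ≃ₗ[k]
      ((Fin r → MvPolynomial (Fin d) k) ⧸ LinearMap.ker Φ) :=
    Submodule.quotEquivOfEq _ _ hker.symm
  let e3 := Φ.quotKerEquivOfSurjective hsurj
  let e : ((Fin r → MvPolynomial (Fin d) k) ⧸ E) ≃ₗ[k] ((a : {a // a ∈ S}) → Q a) :=
    e1.symm.trans (e2.trans e3)
  constructor
  · exact Module.Finite.equiv e.symm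
  · rw [e.finrank_eq, hdim]
end

section
/- Let χ be a characteristic function with parameters r, d. Let I be an irreflexive relation on P_χ such that I_χ ⊆ I and such that for every (p, q) ∈ I there exist a ∈ p and b ∈ q with a ≤ b. Then I and I_χ have the same transitive closure as relations on P_χ; in particular, every (p, q) ∈ I satisfies d(p) < d(q), so (P_{1,χ}, …, P_{r−1,χ}, I) is a rank r−1 incidence structure equivalent to S_χ. -/
/-- Two points of `ℕ^d` are *adjacent*: they agree in all but one coordinate,
where they differ by exactly `1`. -/
def GridAdj {d : ℕ} (a b : Fin d → ℕ) : Prop :=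
  ∃ j : Fin d, (∀ i : Fin d, i ≠ j → a i = b i) ∧ (a j = b j + 1 ∨ b j = a j + 1)

/-- The connected component of `a` inside the level set `χ⁻¹({χ a})`:
all points reachable from `a` by paths of adjacent points on which `χ` keeps the value `χ a`. -/
def CompOf {d : ℕ} (χ : (Fin d → ℕ) → ℤ) (a : Fin d → ℕ) : Set (Fin d → ℕ) :=
  {b | Relation.ReflTransGen (fun x y => GridAdj x y ∧ χ x = χ a ∧ χ y = χ a) a b}

/-- `P_χ`: the set of connected components of the level sets `χ⁻¹({r - i})` for `1 ≤ i ≤ r - 1`,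
i.e. components of level sets whose value lies in `[1, r-1]`. -/
def Pchi {d : ℕ} (r : ℕ) (χ : (Fin d → ℕ) → ℤ) : Set (Set (Fin d → ℕ)) :=
  {p | ∃ a : Fin d → ℕ, 1 ≤ χ a ∧ χ a ≤ (r : ℤ) - 1 ∧ p = CompOf χ a}

/-- The incidence relation `I_χ` on components: `(p, q) ∈ I_χ` iff `d(p) < d(q)`
(equivalently, the `χ`-value on `p` exceeds that on `q`) and there are adjacent
`a ∈ p`, `b ∈ q` with `a ≤ b`. -/
def Ichi {d : ℕ} (χ : (Fin d → ℕ) → ℤ) (p q : Set (Fin d → ℕ)) : Prop :=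
  ∃ a ∈ p, ∃ b ∈ q, GridAdj a b ∧ a ≤ b ∧ χ b < χ a

/-- A *characteristic function* with parameters `r, d`: `0 ≤ χ ≤ r`, finite support,
and antitone for the componentwise order on `ℕ^d`. -/
def IsCharFun (r d : ℕ) (χ : (Fin d → ℕ) → ℤ) : Prop :=
  (∀ a, 0 ≤ χ a ∧ χ a ≤ (r : ℤ)) ∧ (Function.support χ).Finite ∧
    ∀ a b : Fin d → ℕ, a ≤ b → χ b ≤ χ a

/-- A rank `kk` incidence structure: a finite set `P` partitioned by the degree map
`deg : P → {1, …, kk}` together with a relation `I` only relating elements of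
strictly increasing degree. -/
structure IncStruct (kk : ℕ) where
  P : Type
  finP : Finite P
  deg : P → ℕ
  deg_pos : ∀ p, 1 ≤ deg p
  deg_le : ∀ p, deg p ≤ kk
  I : P → P → Prop
  I_lt : ∀ p q, I p q → deg p < deg q

/-- The incidence structure `S_χ` associated to a characteristic function `χ`
(with parameters `r, d`) is *equivalent* to the incidence structure `S`:
there is a degree-preserving bijection between `P_χ` and `S.P` under which
`I_χ` and `S.I` have the same transitive closure. -/
def EquivToSchi {d : ℕ} (r : ℕ) (χ : (Fin d → ℕ) → ℤ) {kk : ℕ} (S : IncStruct kk) : Prop :=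
  ∃ e : {p : Set (Fin d → ℕ) // p ∈ Pchi r χ} ≃ S.P,
    (∀ p : {p : Set (Fin d → ℕ) // p ∈ Pchi r χ}, ∀ a ∈ p.1,
      (S.deg (e p) : ℤ) = (r : ℤ) - χ a) ∧
    ∀ p q : {p : Set (Fin d → ℕ) // p ∈ Pchi r χ},
      Relation.TransGen
          (fun u v : {p : Set (Fin d → ℕ) // p ∈ Pchi r χ} => Ichi χ u.1 v.1) p q ↔
        Relation.TransGen S.I (e p) (e q)

lemma gridAdj_symm {d : ℕ} : Symmetric (@GridAdj d) := by
  rintro a b ⟨j, h1, h2⟩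
  exact ⟨j, fun i hi => (h1 i hi).symm, h2.symm⟩

lemma mem_compOf_self {d : ℕ} (χ : (Fin d → ℕ) → ℤ) (a : Fin d → ℕ) : a ∈ CompOf χ a :=
  Relation.ReflTransGen.refl

lemma chi_eq_of_mem {d : ℕ} {χ : (Fin d → ℕ) → ℤ} {a b : Fin d → ℕ}
    (h : b ∈ CompOf χ a) : χ b = χ a := by
  induction h with
  | refl => rfl
  | tail _ step ih => exact step.2.2

lemma compOf_eq_of_mem {d : ℕ} {χ : (Fin d → ℕ) → ℤ} {a b : Fin d → ℕ}
    (h : b ∈ CompOf χ a) : CompOf χ a = CompOf χ b := by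
  have hba : χ b = χ a := chi_eq_of_mem h
  have hsymm : Symmetric (fun x y => GridAdj x y ∧ χ x = χ a ∧ χ y = χ a) := by
    rintro x y ⟨h1, h2, h3⟩; exact ⟨gridAdj_symm h1, h3, h2⟩
  ext c
  show _ ↔ Relation.ReflTransGen (fun x y => GridAdj x y ∧ χ x = χ b ∧ χ y = χ b) b c
  rw [hba]
  constructor
  · intro hc; exact ((@Relation.ReflTransGen.symmetric _ (fun x y => GridAdj x y ∧ χ x = χ a ∧ χ y = χ a) ⟨fun _ _ h => hsymm h⟩).symm _ _ h).trans hc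
  · intro hc; exact Relation.ReflTransGen.trans h hc

lemma mem_compOf_of_le_of_eq {r d : ℕ} {χ : (Fin d → ℕ) → ℤ} (hχ : IsCharFun r d χ) :
    ∀ n : ℕ, ∀ a b : Fin d → ℕ, (∑ i, (b i - a i)) ≤ n → a ≤ b → χ b = χ a →
      b ∈ CompOf χ a := by
  intro n
  induction n with
  | zero =>
    intro a b hsum hab _
    have : a = b := by
      funext i
      have h1 : b i - a i = 0 := by
        have := Finset.sum_eq_zero_iff.mp (Nat.le_zero.mp hsum) i (Finset.mem_univ i)
        exact this
      have h2 : a i ≤ b i := hab i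
      omega
    rw [← this]; exact mem_compOf_self χ a
  | succ n ih =>
    intro a b hsum hab heq
    by_cases hab' : a = b
    · rw [← hab']; exact mem_compOf_self χ a
    · have : ∃ j, a j < b j := by
        by_contra hc
        push_neg at hc
        exact hab' (funext fun i => le_antisymm (hab i) (hc i))
      obtain ⟨j, hj⟩ := this
      set a' := Function.update a j (a j + 1) with ha'
      have haa' : a ≤ a' := by
        intro i
        by_cases hij : i = j
        · subst hij; simp [ha']
        · simp [ha', Function.update_of_ne hij]
      have ha'b : a' ≤ b := by
        intro i
        by_cases hij : i = j
        · subst hij; simp [ha']; omega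
        · simp [ha', Function.update_of_ne hij]; exact hab i
      have hsum' : (∑ i, (b i - a' i)) ≤ n := by
        have hlt : (∑ i, (b i - a' i)) < ∑ i, (b i - a i) := by
          apply Finset.sum_lt_sum
          · intro i _
            by_cases hij : i = j
            · subst hij; simp [ha']; omega
            · simp [ha', Function.update_of_ne hij]
          · exact ⟨j, Finset.mem_univ j, by simp [ha']; omega⟩
        omega
      have hadj : GridAdj a a' := by
        refine ⟨j, fun i hi => ?_, Or.inr ?_⟩
        · simp [ha', Function.update_of_ne hi]
        · simp [ha']
      have hmono := hχ.2.2
      have h1 : χ a' ≤ χ a := hmono a a' haa'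
      have h2 : χ b ≤ χ a' := hmono a' b ha'b
      have heq' : χ a' = χ a := le_antisymm h1 (heq ▸ h2)
      have hstep : a' ∈ CompOf χ a := Relation.ReflTransGen.single ⟨hadj, rfl, heq'⟩
      have := ih a' b hsum' ha'b (heq' ▸ heq)
      rw [compOf_eq_of_mem hstep]
      exact this

lemma path_lemma {r d : ℕ} {χ : (Fin d → ℕ) → ℤ} (hχ : IsCharFun r d χ) :
    ∀ n : ℕ, ∀ a b : Fin d → ℕ, (∑ i, (b i - a i)) ≤ n → a ≤ b → 1 ≤ χ b →
      χ a ≤ (r : ℤ) - 1 →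
      ∀ pa pb : {p : Set (Fin d → ℕ) // p ∈ Pchi r χ},
        pa.1 = CompOf χ a → pb.1 = CompOf χ b →
        Relation.ReflTransGen
          (fun u v : {p : Set (Fin d → ℕ) // p ∈ Pchi r χ} => Ichi χ u.1 v.1) pa pb := by
  intro n
  induction n with
  | zero =>
    intro a b hsum hab _ _ pa pb hpa hpb
    have : a = b := by
      funext i
      have h1 : b i - a i = 0 :=
        Finset.sum_eq_zero_iff.mp (Nat.le_zero.mp hsum) i (Finset.mem_univ i)
      have h2 : a i ≤ b i := hab i; omega
    have : pa = pb := Subtype.ext (by rw [hpa, hpb, this])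
    rw [this]
  | succ n ih =>
    intro a b hsum hab hb1 har pa pb hpa hpb
    by_cases hab' : a = b
    · have : pa = pb := Subtype.ext (by rw [hpa, hpb, hab'])
      rw [this]
    · have : ∃ j, a j < b j := by
        by_contra hc
        push_neg at hc
        exact hab' (funext fun i => le_antisymm (hab i) (hc i))
      obtain ⟨j, hj⟩ := this
      set a' := Function.update a j (a j + 1) with ha'
      have haa' : a ≤ a' := by
        intro i
        by_cases hij : i = j
        · subst hij; simp [ha']
        · simp [ha', Function.update_of_ne hij]
      have ha'b : a' ≤ b := by
        intro i
        by_cases hij : i = j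
        · subst hij; simp [ha']; omega
        · simp [ha', Function.update_of_ne hij]; exact hab i
      have hsum' : (∑ i, (b i - a' i)) ≤ n := by
        have hlt : (∑ i, (b i - a' i)) < ∑ i, (b i - a i) := by
          apply Finset.sum_lt_sum
          · intro i _
            by_cases hij : i = j
            · subst hij; simp [ha']; omega
            · simp [ha', Function.update_of_ne hij]
          · exact ⟨j, Finset.mem_univ j, by simp [ha']; omega⟩
        omega
      have hadj : GridAdj a a' := by
        refine ⟨j, fun i hi => ?_, Or.inr ?_⟩
        · simp [ha', Function.update_of_ne hi]
        · simp [ha']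
      have hmono := hχ.2.2
      have h1 : χ a' ≤ χ a := hmono a a' haa'
      have h2 : χ b ≤ χ a' := hmono a' b ha'b
      have ha'1 : 1 ≤ χ a' := le_trans hb1 h2
      have ha'r : χ a' ≤ (r : ℤ) - 1 := le_trans h1 har
      by_cases hval : χ a' = χ a
      · have hstep : a' ∈ CompOf χ a := Relation.ReflTransGen.single ⟨hadj, rfl, hval⟩
        exact ih a' b hsum' ha'b hb1 ha'r pa pb
          (by rw [hpa, compOf_eq_of_mem hstep]) hpb
      · have hlt : χ a' < χ a := lt_of_le_of_ne h1 hval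
        have hmem : CompOf χ a' ∈ Pchi r χ := ⟨a', ha'1, ha'r, rfl⟩
        refine Relation.ReflTransGen.head (b := ⟨CompOf χ a', hmem⟩) ?_ ?_
        · exact ⟨a, by rw [hpa]; exact mem_compOf_self χ a,
            a', mem_compOf_self χ a', hadj, haa', hlt⟩
        · exact ih a' b hsum' ha'b hb1 ha'r _ pb rfl hpb

/-- Let `χ` be a characteristic function with parameters `r, d`.  Let `J` be
an irreflexive relation on `P_χ` such that `I_χ ⊆ J` and such that for every `(p, q) ∈ J`
there exist `a ∈ p` and `b ∈ q` with `a ≤ b`.  Then `J` and `I_χ` have the same transitive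
closure as relations on `P_χ`; in particular every `(p, q) ∈ J` satisfies `d(p) < d(q)`
(i.e. the `χ`-value on `q` is strictly smaller than the `χ`-value on `p`), so
`(P_{1,χ}, …, P_{r−1,χ}, J)` is a rank `r−1` incidence structure equivalent to `S_χ`. -/
theorem statement2 {r d : ℕ} (hr : 1 ≤ r) (hd : 1 ≤ d)
    (χ : (Fin d → ℕ) → ℤ) (hχ : IsCharFun r d χ)
    (J : {p : Set (Fin d → ℕ) // p ∈ Pchi r χ} →
         {p : Set (Fin d → ℕ) // p ∈ Pchi r χ} → Prop)
    (hirr : ∀ p, ¬ J p p)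
    (hsub : ∀ p q, Ichi χ p.1 q.1 → J p q)
    (hle : ∀ p q, J p q → ∃ a ∈ p.1, ∃ b ∈ q.1, a ≤ b) :
    (∀ p q, Relation.TransGen J p q ↔
        Relation.TransGen
          (fun u v : {p : Set (Fin d → ℕ) // p ∈ Pchi r χ} => Ichi χ u.1 v.1) p q) ∧
    (∀ p q, J p q → ∀ a ∈ p.1, ∀ b ∈ q.1, χ b < χ a) := by
  have hmono := hχ.2.2
  have key : ∀ p q, J p q → ∀ a ∈ p.1, ∀ b ∈ q.1, χ b < χ a := by
    intro p q hJ a ha b hb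
    obtain ⟨a', ha', b', hb', hab'⟩ := hle p q hJ
    obtain ⟨a₀, ha₀1, ha₀r, hp⟩ := p.2
    obtain ⟨b₀, hb₀1, hb₀r, hq⟩ := q.2
    have hχa : χ a = χ a₀ := chi_eq_of_mem (hp ▸ ha)
    have hχa' : χ a' = χ a₀ := chi_eq_of_mem (hp ▸ ha')
    have hχb : χ b = χ b₀ := chi_eq_of_mem (hq ▸ hb)
    have hχb' : χ b' = χ b₀ := chi_eq_of_mem (hq ▸ hb')
    have hle' : χ b' ≤ χ a' := hmono a' b' hab'
    rcases lt_or_eq_of_le hle' with h | h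
    · omega
    · exfalso
      have hmem : b' ∈ CompOf χ a' :=
        mem_compOf_of_le_of_eq hχ (∑ i, (b' i - a' i)) a' b' le_rfl hab' h
      have hpq : p = q := by
        apply Subtype.ext
        rw [hp, hq, compOf_eq_of_mem (hp ▸ ha' : a' ∈ CompOf χ a₀),
          compOf_eq_of_mem (hq ▸ hb' : b' ∈ CompOf χ b₀),
          compOf_eq_of_mem hmem]
      exact hirr q (hpq ▸ hJ)
  have step : ∀ p q, J p q →
      Relation.TransGen
        (fun u v : {p : Set (Fin d → ℕ) // p ∈ Pchi r χ} => Ichi χ u.1 v.1) p q := by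
    intro p q hJ
    obtain ⟨a', ha', b', hb', hab'⟩ := hle p q hJ
    obtain ⟨a₀, ha₀1, ha₀r, hp⟩ := p.2
    obtain ⟨b₀, hb₀1, hb₀r, hq⟩ := q.2
    have hχa' : χ a' = χ a₀ := chi_eq_of_mem (hp ▸ ha')
    have hχb' : χ b' = χ b₀ := chi_eq_of_mem (hq ▸ hb')
    have hlt : χ b' < χ a' := key p q hJ a' ha' b' hb'
    have hrtg := path_lemma hχ (∑ i, (b' i - a' i)) a' b' le_rfl hab'
      (by omega) (by omega) p q
      (by rw [hp]; exact compOf_eq_of_mem (hp ▸ ha'))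
      (by rw [hq]; exact compOf_eq_of_mem (hq ▸ hb'))
    rcases Relation.reflTransGen_iff_eq_or_transGen.mp hrtg with heq | htg
    · exfalso
      have : b' ∈ p.1 := by rw [← heq]; exact hb'
      have : χ b' = χ a₀ := chi_eq_of_mem (hp ▸ this)
      omega
    · exact htg
  refine ⟨fun p q => ⟨fun h => ?_, fun h => ?_⟩, key⟩
  · induction h with
    | single h => exact step _ _ h
    | tail _ h ih => exact ih.trans (step _ _ h)
  · exact Relation.TransGen.mono hsub p q h
end

section
/- Let r ≥ 1. (i) For every characteristic function χ : ℕ → ℤ with parameters r, d = 1, each set P_{i,χ} (1 ≤ i ≤ r−1) has at most one element, and for all p, q ∈ P_χ with d(p) < d(q) the pair (p, q) lies in the transitive closure of I_χ. (ii) Conversely, if S = (P₁, …, P_{r−1}, I) is a rank r−1 incidence structure with |Pᵢ| ≤ 1 for all i and such that the transitive closure of I contains every pair (p, q) with p, q ∈ ⋃ᵢ Pᵢ and d(p) < d(q), then there exists a characteristic function χ : ℕ → ℤ with parameters r, 1 such that S_χ is equivalent to S. -/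
/- ## Auxiliary lemmas -/

lemma aux_fin1_le {a b : Fin 1 → ℕ} (h : a 0 ≤ b 0) : a ≤ b := by
  intro i
  rw [Subsingleton.elim i 0]
  exact h

lemma aux_fin1_eq {a b : Fin 1 → ℕ} (h : a 0 = b 0) : a = b := by
  funext i
  rw [Subsingleton.elim i 0, h]

lemma aux_adj_symm {d : ℕ} {a b : Fin d → ℕ} (h : GridAdj a b) : GridAdj b a := by
  obtain ⟨j, h1, h2⟩ := h
  exact ⟨j, fun i hi => (h1 i hi).symm, h2.symm⟩

lemma aux_adj_step {a c : Fin 1 → ℕ} (h : c 0 = a 0 + 1) : GridAdj a c :=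
  ⟨0, fun i hi => absurd (Subsingleton.elim i 0) hi, Or.inr h⟩

lemma aux_val_eq {χ : (Fin 1 → ℕ) → ℤ} {a x : Fin 1 → ℕ} (hx : x ∈ CompOf χ a) :
    χ x = χ a := by
  induction hx with
  | refl => rfl
  | tail _ h _ => exact h.2.2

lemma aux_comp_eq_of_mem {χ : (Fin 1 → ℕ) → ℤ} {a b : Fin 1 → ℕ} (hb : b ∈ CompOf χ a) :
    CompOf χ a = CompOf χ b := by
  have hba : χ b = χ a := aux_val_eq hb
  have hrel : (fun x y => GridAdj x y ∧ χ x = χ b ∧ χ y = χ b)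
      = (fun x y => GridAdj x y ∧ χ x = χ a ∧ χ y = χ a) := by
    simp only [hba]
  have hsym : Symmetric (fun x y => GridAdj x y ∧ χ x = χ a ∧ χ y = χ a) :=
    fun x y ⟨h1, h2, h3⟩ => ⟨aux_adj_symm h1, h3, h2⟩
  haveI : Std.Symm (fun x y => GridAdj x y ∧ χ x = χ a ∧ χ y = χ a) := ⟨fun x y h => hsym h⟩
  have hsymRT : Symmetric (Relation.ReflTransGen (fun x y => GridAdj x y ∧ χ x = χ a ∧ χ y = χ a)) :=
    fun x y h => Relation.ReflTransGen.symmetric.symm x y h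
  ext x
  simp only [CompOf, Set.mem_setOf_eq, hrel]
  constructor
  · intro hx
    exact (hsymRT hb).trans hx
  · intro hx
    exact Relation.ReflTransGen.trans hb hx

lemma aux_reach {χ : (Fin 1 → ℕ) → ℤ}
    (hmono : ∀ a b : Fin 1 → ℕ, a ≤ b → χ b ≤ χ a) :
    ∀ (n : ℕ) (a b : Fin 1 → ℕ), b 0 = a 0 + n → χ b = χ a → b ∈ CompOf χ a := by
  intro n
  induction n with
  | zero =>
    intro a b h _
    have : b = a := aux_fin1_eq (by omega)
    rw [this]
    exact Relation.ReflTransGen.refl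
  | succ n ih =>
    intro a b h hv
    set c : Fin 1 → ℕ := fun _ => a 0 + n with hc
    have hc0 : c 0 = a 0 + n := rfl
    have hχc : χ c = χ a := by
      have h1 : χ b ≤ χ c := hmono c b (aux_fin1_le (by omega))
      have h2 : χ c ≤ χ a := hmono a c (aux_fin1_le (by omega))
      omega
    have hmem : c ∈ CompOf χ a := ih a c rfl hχc
    exact hmem.tail ⟨aux_adj_step (by omega), hχc, hv⟩

lemma aux_comp_eq {χ : (Fin 1 → ℕ) → ℤ}
    (hmono : ∀ a b : Fin 1 → ℕ, a ≤ b → χ b ≤ χ a)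
    {a b : Fin 1 → ℕ} (h : χ b = χ a) : CompOf χ a = CompOf χ b := by
  rcases le_total (a 0) (b 0) with hab | hab
  · exact aux_comp_eq_of_mem (aux_reach hmono (b 0 - a 0) a b (by omega) h)
  · exact (aux_comp_eq_of_mem (aux_reach hmono (a 0 - b 0) b a (by omega) h.symm)).symm

lemma aux_key {r : ℕ} {χ : (Fin 1 → ℕ) → ℤ}
    (hmono : ∀ a b : Fin 1 → ℕ, a ≤ b → χ b ≤ χ a) :
    ∀ (k : ℕ) (a b : Fin 1 → ℕ), b 0 - a 0 ≤ k → 1 ≤ χ b → χ a ≤ (r : ℤ) - 1 →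
      χ b < χ a →
      Relation.TransGen
        (fun p q : Set (Fin 1 → ℕ) => p ∈ Pchi r χ ∧ q ∈ Pchi r χ ∧ Ichi χ p q)
        (CompOf χ a) (CompOf χ b) := by
  intro k
  induction k with
  | zero =>
    intro a b hk h1 h2 h3
    have hba : b 0 ≤ a 0 := by omega
    have : χ a ≤ χ b := hmono b a (aux_fin1_le hba)
    omega
  | succ k ih =>
    intro a b hk h1 h2 h3
    have hab : a 0 < b 0 := by
      by_contra h
      have : χ a ≤ χ b := hmono b a (aux_fin1_le (by omega))
      omega
    set c : Fin 1 → ℕ := fun _ => a 0 + 1 with hcdef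
    have hc0 : c 0 = a 0 + 1 := rfl
    have hχcb : χ b ≤ χ c := hmono c b (aux_fin1_le (by omega))
    have hχca : χ c ≤ χ a := hmono a c (aux_fin1_le (by omega))
    by_cases hca : χ c = χ a
    · rw [aux_comp_eq hmono hca]
      exact ih c b (by omega) h1 (by omega) (by omega)
    · have hlt : χ c < χ a := lt_of_le_of_ne hχca hca
      have hmem_a : CompOf χ a ∈ Pchi r χ := ⟨a, by omega, h2, rfl⟩
      have hmem_c : CompOf χ c ∈ Pchi r χ := ⟨c, by omega, by omega, rfl⟩
      have hstep : Ichi χ (CompOf χ a) (CompOf χ c) :=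
        ⟨a, Relation.ReflTransGen.refl, c, Relation.ReflTransGen.refl,
          aux_adj_step hc0, aux_fin1_le (by omega), hlt⟩
      by_cases hcb : χ c = χ b
      · have := aux_comp_eq hmono (a := c) (b := b) hcb.symm
        rw [← this]
        exact Relation.TransGen.single ⟨hmem_a, hmem_c, hstep⟩
      · exact Relation.TransGen.head ⟨hmem_a, hmem_c, hstep⟩
          (ih c b (by omega) h1 (by omega) (by omega))

lemma aux_lift {α : Type*} {P : Set α} {R : α → α → Prop} {a b : α}
    (h : Relation.TransGen (fun x y => x ∈ P ∧ y ∈ P ∧ R x y) a b)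
    (ha : a ∈ P) :
    ∀ hb : b ∈ P,
      Relation.TransGen (fun u v : {x // x ∈ P} => R u.1 v.1) ⟨a, ha⟩ ⟨b, hb⟩ := by
  induction h with
  | single h => intro hb; exact Relation.TransGen.single h.2.2
  | tail _ h ih => intro hc; exact (ih h.1).tail h.2.2

/- ## The characteristic function built from a sorted list of degrees -/

noncomputable def chiOf (r : ℕ) (L : List ℕ) : (Fin 1 → ℕ) → ℤ :=
  fun a => if h : a 0 < L.length then (r : ℤ) - L.get ⟨a 0, h⟩ else 0

lemma chiOf_pos {r : ℕ} {L : List ℕ} {a : Fin 1 → ℕ} (h : a 0 < L.length) :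
    chiOf r L a = (r : ℤ) - L.get ⟨a 0, h⟩ := dif_pos h

lemma chiOf_neg {r : ℕ} {L : List ℕ} {a : Fin 1 → ℕ} (h : ¬ a 0 < L.length) :
    chiOf r L a = 0 := dif_neg h

lemma chiOf_mono {r : ℕ} {L : List ℕ} (hL : L.Pairwise (· < ·))
    (hub : ∀ x ∈ L, (x : ℤ) ≤ (r : ℤ) - 1) :
    ∀ a b : Fin 1 → ℕ, a ≤ b → chiOf r L b ≤ chiOf r L a := by
  intro a b hab
  have h0 : a 0 ≤ b 0 := hab 0
  by_cases hb : b 0 < L.length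
  · have ha : a 0 < L.length := lt_of_le_of_lt h0 hb
    rw [chiOf_pos ha, chiOf_pos hb]
    have : L.get ⟨a 0, ha⟩ ≤ L.get ⟨b 0, hb⟩ :=
      hL.sortedLT.strictMono_get.monotone (by exact h0)
    omega
  · rw [chiOf_neg hb]
    by_cases ha : a 0 < L.length
    · rw [chiOf_pos ha]
      have := hub (L.get ⟨a 0, ha⟩) (L.get_mem _)
      omega
    · rw [chiOf_neg ha]


/-- Let `r ≥ 1`.
(i) For every characteristic function `χ : ℕ → ℤ` with parameters `r, d = 1`, each part
`P_{i,χ}` has at most one element (two components with equal `χ`-value coincide), and any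
two components `p = [a]`, `q = [b]` with `d(p) < d(q)` (i.e. `χ b < χ a`) are related by the
transitive closure of `I_χ`.
(ii) Conversely, if `S` is a rank `r−1` incidence structure with `|Pᵢ| ≤ 1` for all `i` and
such that the transitive closure of `I` contains every pair `(p, q)` with `deg p < deg q`,
then there is a characteristic function `χ : ℕ → ℤ` with parameters `r, 1` such that `S_χ`
is equivalent to `S`. -/
theorem statement5 {r : ℕ} (hr : 1 ≤ r) :
    (∀ χ : (Fin 1 → ℕ) → ℤ, IsCharFun r 1 χ →
      ((∀ a b : Fin 1 → ℕ, 1 ≤ χ a → χ a ≤ (r : ℤ) - 1 → χ b = χ a →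
          CompOf χ a = CompOf χ b) ∧
       (∀ a b : Fin 1 → ℕ, 1 ≤ χ b → χ a ≤ (r : ℤ) - 1 → χ b < χ a →
          Relation.TransGen
            (fun p q : Set (Fin 1 → ℕ) => p ∈ Pchi r χ ∧ q ∈ Pchi r χ ∧ Ichi χ p q)
            (CompOf χ a) (CompOf χ b)))) ∧
    (∀ S : IncStruct (r - 1),
      (∀ p q : S.P, S.deg p = S.deg q → p = q) →
      (∀ p q : S.P, S.deg p < S.deg q → Relation.TransGen S.I p q) →
      ∃ χ : (Fin 1 → ℕ) → ℤ, IsCharFun r 1 χ ∧ EquivToSchi r χ S) := by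
  constructor
  · rintro χ ⟨_, _, hmono⟩
    refine ⟨fun a b _ _ h3 => aux_comp_eq hmono h3, fun a b h1 h2 h3 => ?_⟩
    exact aux_key hmono (b 0 - a 0) a b le_rfl h1 h2 h3
  · intro S hdeg hI
    classical
    haveI := S.finP
    haveI : Fintype S.P := Fintype.ofFinite S.P
    set D : Finset ℕ := Finset.univ.image S.deg with hD
    set L : List ℕ := D.sort (· ≤ ·) with hLdef
    have hL : L.Pairwise (· < ·) := D.sortedLT_sort.pairwise
    have hnd : L.Nodup := D.sort_nodup (· ≤ ·)
    have hmemL : ∀ x ∈ L, ∃ s, S.deg s = x := by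
      intro x hx
      rw [hLdef, Finset.mem_sort] at hx
      obtain ⟨s, _, hs⟩ := Finset.mem_image.mp hx
      exact ⟨s, hs⟩
    have hlb : ∀ x ∈ L, 1 ≤ x := by
      intro x hx
      obtain ⟨s, hs⟩ := hmemL x hx
      exact hs ▸ S.deg_pos s
    have hub : ∀ x ∈ L, (x : ℤ) ≤ (r : ℤ) - 1 := by
      intro x hx
      obtain ⟨s, hs⟩ := hmemL x hx
      have := S.deg_le s
      have h1 := S.deg_pos s
      rw [← hs]
      omega
    set χ : (Fin 1 → ℕ) → ℤ := chiOf r L with hχ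
    have hmono : ∀ a b : Fin 1 → ℕ, a ≤ b → χ b ≤ χ a := chiOf_mono hL hub
    have hchar : IsCharFun r 1 χ := by
      refine ⟨fun a => ?_, ?_, hmono⟩
      · by_cases h : a 0 < L.length
        · rw [hχ, chiOf_pos h]
          have h1 := hlb (L.get ⟨a 0, h⟩) (L.get_mem ⟨a 0, h⟩)
          have h2 := hub (L.get ⟨a 0, h⟩) (L.get_mem ⟨a 0, h⟩)
          omega
        · rw [hχ, chiOf_neg h]
          constructor
          · exact le_refl 0
          · positivity
      · have hsub : Function.support χ ⊆ (fun a : Fin 1 → ℕ => a 0) ⁻¹' (Set.Iio L.length) := by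
          intro a ha
          simp only [Set.mem_preimage, Set.mem_Iio]
          by_contra h
          exact ha (by rw [hχ]; exact chiOf_neg h)
        have hinj : Function.Injective (fun a : Fin 1 → ℕ => a 0) :=
          fun a b h => aux_fin1_eq h
        exact ((Set.finite_Iio _).preimage hinj.injOn).subset hsub
    -- the bijection
    have hidx : ∀ s : S.P, S.deg s ∈ L := by
      intro s
      rw [hLdef, Finset.mem_sort]
      exact Finset.mem_image.mpr ⟨s, Finset.mem_univ s, rfl⟩
    have hidxlt : ∀ s : S.P, L.idxOf (S.deg s) < L.length :=
      fun s => List.idxOf_lt_length_iff.mpr (hidx s)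
    have hidxget : ∀ s : S.P, L.get ⟨L.idxOf (S.deg s), hidxlt s⟩ = S.deg s :=
      fun s => List.idxOf_get (hidxlt s)
    have hχcn : ∀ s : S.P, χ (fun _ => L.idxOf (S.deg s)) = (r : ℤ) - S.deg s := by
      intro s
      rw [hχ, chiOf_pos (hidxlt s)]
      rw [hidxget s]
    have hgmem : ∀ s : S.P, CompOf χ (fun _ => L.idxOf (S.deg s)) ∈ Pchi r χ := by
      intro s
      refine ⟨fun _ => L.idxOf (S.deg s), ?_, ?_, rfl⟩
      · rw [hχcn s]
        have := hub _ (hidx s)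
        have hd1 := S.deg_pos s
        omega
      · rw [hχcn s]
        have := hlb _ (hidx s)
        omega
    have hbij : Function.Bijective
        (fun s : S.P => (⟨CompOf χ (fun _ => L.idxOf (S.deg s)), hgmem s⟩ :
          {p : Set (Fin 1 → ℕ) // p ∈ Pchi r χ})) := by
      constructor
      · intro s t hst
        have hco : CompOf χ (fun _ => L.idxOf (S.deg s))
            = CompOf χ (fun _ => L.idxOf (S.deg t)) := congrArg Subtype.val hst
        have hmem : (fun _ => L.idxOf (S.deg t) : Fin 1 → ℕ)
            ∈ CompOf χ (fun _ => L.idxOf (S.deg s)) := by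
          rw [hco]; exact Relation.ReflTransGen.refl
        have hveq := aux_val_eq hmem
        rw [hχcn s, hχcn t] at hveq
        exact (hdeg t s (by omega)).symm
      · rintro ⟨p, a, ha1, ha2, hap⟩
        have halen : a 0 < L.length := by
          by_contra h
          rw [hχ, chiOf_neg h] at ha1
          omega
        have hgetD : L.get ⟨a 0, halen⟩ ∈ L := L.get_mem _
        obtain ⟨s, hs⟩ := hmemL _ hgetD
        have hidxa : L.idxOf (S.deg s) = a 0 := by
          rw [hs]
          exact List.get_idxOf hnd ⟨a 0, halen⟩
        refine ⟨s, ?_⟩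
        apply Subtype.ext
        show CompOf χ (fun _ => L.idxOf (S.deg s)) = p
        rw [hap]
        have hfe : (fun _ => L.idxOf (S.deg s) : Fin 1 → ℕ) = a := aux_fin1_eq hidxa
        rw [hfe]
    set e := (Equiv.ofBijective _ hbij).symm with he
    have hge : ∀ p : {p : Set (Fin 1 → ℕ) // p ∈ Pchi r χ},
        p.1 = CompOf χ (fun _ => L.idxOf (S.deg (e p))) := by
      intro p
      have := (Equiv.ofBijective _ hbij).apply_symm_apply p
      rw [he]
      exact (congrArg Subtype.val this).symm
    have hdegval : ∀ p : {p : Set (Fin 1 → ℕ) // p ∈ Pchi r χ}, ∀ a ∈ p.1,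
        (S.deg (e p) : ℤ) = (r : ℤ) - χ a := by
      intro p a ha
      rw [hge p] at ha
      have := aux_val_eq ha
      rw [hχcn (e p)] at this
      omega
    refine ⟨χ, hchar, e, hdegval, ?_⟩
    intro p q
    constructor
    · intro h
      apply hI
      -- show deg decreases along Ichi chains
      have hstep : ∀ u v : {p : Set (Fin 1 → ℕ) // p ∈ Pchi r χ},
          Ichi χ u.1 v.1 → S.deg (e u) < S.deg (e v) := by
        rintro u v ⟨a, ha, b, hb, _, _, hlt⟩
        have h1 := hdegval u a ha
        have h2 := hdegval v b hb
        omega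
      clear hI
      induction h with
      | single h => exact hstep _ _ h
      | tail _ h ih => exact lt_trans ih (hstep _ _ h)
    · intro h
      have hgen : ∀ x y : S.P, Relation.TransGen S.I x y → S.deg x < S.deg y := by
        intro x y hxy
        induction hxy with
        | single h => exact S.I_lt _ _ h
        | tail _ h ih => exact lt_trans ih (S.I_lt _ _ h)
      have hdlt : S.deg (e p) < S.deg (e q) := hgen _ _ h
      -- produce representative points
      obtain ⟨a, ha1, ha2, hap⟩ := p.2
      obtain ⟨b, hb1, hb2, hbq⟩ := q.2
      have hamem : a ∈ p.1 := by rw [hap]; exact Relation.ReflTransGen.refl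
      have hbmem : b ∈ q.1 := by rw [hbq]; exact Relation.ReflTransGen.refl
      have hda := hdegval p a hamem
      have hdb := hdegval q b hbmem
      have hba : χ b < χ a := by
        have : (S.deg (e p) : ℤ) < (S.deg (e q) : ℤ) := by exact_mod_cast hdlt
        omega
      have hkey := aux_key hmono (b 0 - a 0) a b le_rfl hb1 ha2 hba
      have hmem_a : CompOf χ a ∈ Pchi r χ := ⟨a, by omega, ha2, rfl⟩
      have hmem_b : CompOf χ b ∈ Pchi r χ := ⟨b, hb1, hb2, rfl⟩
      have := aux_lift hkey hmem_a hmem_b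
      have hpe : (⟨CompOf χ a, hmem_a⟩ : {p : Set (Fin 1 → ℕ) // p ∈ Pchi r χ}) = p :=
        Subtype.ext hap.symm
      have hqe : (⟨CompOf χ b, hmem_b⟩ : {p : Set (Fin 1 → ℕ) // p ∈ Pchi r χ}) = q :=
        Subtype.ext hbq.symm
      rwa [hpe, hqe] at this
end

section
/- Let r ≥ 1 and let S = (P₁, …, P_{r−1}, I) be a rank r−1 incidence structure. Then there exists a characteristic function χ : ℕ² → ℤ with parameters r, d = 2 such that S_χ is equivalent to S, if and only if S is equivalent to a rank r−1 incidence structure (P₁, …, P_{r−1}, I′) for which there exist nonempty closed bounded intervals J_p ⊆ ℝ, one for each p ∈ ⋃ᵢ Pᵢ, such that J_p ∩ J_q = ∅ whenever p ≠ q lie in the same part Pᵢ, and such that for p ∈ Pᵢ, q ∈ Pⱼ with i < j one has (p, q) ∈ I′ if and only if J_p ∩ J_q ≠ ∅. -/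
namespace St6

abbrev Pt := Fin 2 → ℕ

/-- diagonal coordinate -/
def tc (a : Pt) : ℤ := (a 0 : ℤ) - (a 1 : ℤ)

lemma gridAdj_symm {a b : Pt} (h : GridAdj a b) : GridAdj b a := by
  obtain ⟨j, h1, h2⟩ := h
  exact ⟨j, fun i hi => (h1 i hi).symm, h2.symm⟩

lemma fin2cases (i : Fin 2) : i = 0 ∨ i = 1 := by omega

lemma tc_adj {a b : Pt} (h : GridAdj a b) : tc a = tc b + 1 ∨ tc b = tc a + 1 := by
  obtain ⟨j, h1, h2⟩ := h
  unfold tc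
  rcases fin2cases j with rfl | rfl
  · have e1 : a 1 = b 1 := h1 1 (by decide)
    rcases h2 with h2 | h2 <;> omega
  · have e0 : a 0 = b 0 := h1 0 (by decide)
    rcases h2 with h2 | h2 <;> omega

lemma le_of_coords {a b : Pt} (h0 : a 0 ≤ b 0) (h1 : a 1 ≤ b 1) : a ≤ b := by
  intro i
  rcases fin2cases i with rfl | rfl
  · exact h0
  · exact h1

/-- points on diagonals at distance ≤ 1 are comparable -/
lemma le_or_ge_of_tc {a b : Pt} (h1 : tc a ≤ tc b + 1) (h2 : tc b ≤ tc a + 1) :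
    a ≤ b ∨ b ≤ a := by
  unfold tc at h1 h2
  by_cases hx : a 0 ≤ b 0
  · by_cases hy : a 1 ≤ b 1
    · exact Or.inl (le_of_coords hx hy)
    · exact Or.inr (le_of_coords (by omega) (by omega))
  · exact Or.inr (le_of_coords (by omega) (by omega))

section comps

variable {χ : Pt → ℤ}

lemma mem_compOf_self (χ : Pt → ℤ) (a : Pt) : a ∈ CompOf χ a :=
  Relation.ReflTransGen.refl

lemma val_eq_of_mem {a b : Pt} (h : b ∈ CompOf χ a) : χ b = χ a := by
  induction h with
  | refl => rfl
  | tail _ h2 _ => exact h2.2.2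

lemma compOf_eq_of_mem {a b : Pt} (h : b ∈ CompOf χ a) : CompOf χ b = CompOf χ a := by
  have hv : χ b = χ a := val_eq_of_mem h
  have hsym : Symmetric (fun x y : Pt => GridAdj x y ∧ χ x = χ a ∧ χ y = χ a) :=
    fun x y hxy => ⟨gridAdj_symm hxy.1, hxy.2.2, hxy.2.1⟩
  ext z
  show Relation.ReflTransGen (fun x y => GridAdj x y ∧ χ x = χ b ∧ χ y = χ b) b z ↔
    Relation.ReflTransGen (fun x y => GridAdj x y ∧ χ x = χ a ∧ χ y = χ a) a z
  rw [hv]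
  exact ⟨fun hz => h.trans hz, fun hz => (haveI : Std.Symm (fun x y : Pt => GridAdj x y ∧ χ x = χ a ∧ χ y = χ a) := ⟨fun x y hxy => hsym hxy⟩; Std.Symm.symm (r := Relation.ReflTransGen _) _ _ h).trans hz⟩

lemma adj_update (a : Pt) (i : Fin 2) : GridAdj a (Function.update a i (a i + 1)) :=
  ⟨i, fun k hk => (Function.update_of_ne hk _ _).symm, Or.inr (Function.update_self i _ a)⟩

lemma update_le {a b : Pt} (i : Fin 2) (hle : a ≤ b) (hi : a i < b i) :
    Function.update a i (a i + 1) ≤ b := by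
  intro k
  by_cases hk : k = i
  · subst hk; rw [Function.update_self]; exact hi
  · rw [Function.update_of_ne hk]; exact hle k

lemma le_update (a : Pt) (i : Fin 2) : a ≤ Function.update a i (a i + 1) := by
  intro k
  by_cases hk : k = i
  · subst hk; rw [Function.update_self]; exact Nat.le_succ _
  · rw [Function.update_of_ne hk]

lemma update_coords (a : Pt) (i : Fin 2) :
    (Function.update a i (a i + 1)) 0 + (Function.update a i (a i + 1)) 1
      = a 0 + a 1 + 1 := by
  rcases fin2cases i with rfl | rfl
  · rw [Function.update_self, Function.update_of_ne (by decide : (1:Fin 2) ≠ 0)]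
    omega
  · rw [Function.update_self, Function.update_of_ne (by decide : (0:Fin 2) ≠ 1)]
    omega

/-- constant value along a monotone path: same component -/
lemma compOf_eq_of_le_aux (hmono : ∀ a b : Pt, a ≤ b → χ b ≤ χ a) :
    ∀ n (a b : Pt), (b 0 - a 0) + (b 1 - a 1) = n → a ≤ b → χ a = χ b →
      CompOf χ a = CompOf χ b := by
  intro n
  induction n with
  | zero =>
    intro a b hn hle _
    have h0 : a 0 ≤ b 0 := hle 0
    have h1 : a 1 ≤ b 1 := hle 1
    have : a = b := le_antisymm hle (le_of_coords (by omega) (by omega))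
    rw [this]
  | succ n ih =>
    intro a b hn hle hv
    have hi : a 0 < b 0 ∨ a 1 < b 1 := by
      have h0 : a 0 ≤ b 0 := hle 0
      have h1 : a 1 ≤ b 1 := hle 1
      by_contra hcon
      push_neg at hcon
      omega
    obtain ⟨i, hi⟩ : ∃ i, a i < b i := by
      rcases hi with h | h
      · exact ⟨0, h⟩
      · exact ⟨1, h⟩
    obtain ⟨a', e0, hadj, hle1, hle2⟩ :
        ∃ a' : Pt, a' 0 + a' 1 = a 0 + a 1 + 1 ∧ GridAdj a a' ∧ a ≤ a' ∧ a' ≤ b :=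
      ⟨Function.update a i (a i + 1), update_coords a i, adj_update a i,
        le_update a i, update_le i hle hi⟩
    have hva' : χ a' = χ a :=
      le_antisymm (hmono _ _ hle1) (hv ▸ hmono _ _ hle2)
    have hmem : a' ∈ CompOf χ a :=
      Relation.ReflTransGen.single ⟨hadj, rfl, hva'⟩
    have hstep : CompOf χ a = CompOf χ a' := (compOf_eq_of_mem hmem).symm
    rw [hstep]
    refine ih a' b ?_ hle2 (hva'.trans hv)
    have h0 : a 0 ≤ b 0 := hle 0
    have h1 : a 1 ≤ b 1 := hle 1
    have h0' : a' 0 ≤ b 0 := hle2 0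
    have h1' : a' 1 ≤ b 1 := hle2 1
    omega

lemma compOf_eq_of_le (hmono : ∀ a b : Pt, a ≤ b → χ b ≤ χ a) {a b : Pt} (hle : a ≤ b) (hv : χ a = χ b) :
    CompOf χ a = CompOf χ b :=
  compOf_eq_of_le_aux hmono _ a b rfl hle hv

/-- same value, diagonals within distance 1 : same component -/
lemma compOf_eq_of_tc (hmono : ∀ a b : Pt, a ≤ b → χ b ≤ χ a) {a b : Pt} (hv : χ a = χ b)
    (h1 : tc a ≤ tc b + 1) (h2 : tc b ≤ tc a + 1) : CompOf χ a = CompOf χ b := by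
  rcases le_or_ge_of_tc h1 h2 with h | h
  · exact compOf_eq_of_le hmono h hv
  · exact (compOf_eq_of_le hmono h hv.symm).symm

/-- comparable points, value drop : inequality from monotonicity -/
lemma le_of_tc_of_lt (hmono : ∀ a b : Pt, a ≤ b → χ b ≤ χ a) {a b : Pt} (hlt : χ b < χ a)
    (h1 : tc a ≤ tc b + 1) (h2 : tc b ≤ tc a + 1) : a ≤ b := by
  rcases le_or_ge_of_tc h1 h2 with h | h
  · exact h
  · exact absurd (hmono _ _ h) (by omega)

/-- discrete intermediate value property for the diagonal coordinate on a component -/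
lemma exists_tc_eq {a b : Pt} (h : b ∈ CompOf χ a) (m : ℤ)
    (hm : (tc a ≤ m ∧ m ≤ tc b) ∨ (tc b ≤ m ∧ m ≤ tc a)) :
    ∃ z ∈ CompOf χ a, tc z = m := by
  induction h with
  | refl => exact ⟨a, mem_compOf_self χ a, by omega⟩
  | @tail b c hab hbc ih =>
    by_cases hmid : (tc a ≤ m ∧ m ≤ tc b) ∨ (tc b ≤ m ∧ m ≤ tc a)
    · exact ih hmid
    · have hadj := tc_adj hbc.1
      have : m = tc c := by rcases hadj with h' | h' <;> omega
      exact ⟨c, Relation.ReflTransGen.tail hab hbc, this.symm⟩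

end comps


section chain

variable {χ : Pt → ℤ}

lemma mem_Pchi_compOf (r : ℕ) {a : Pt} (h1 : 1 ≤ χ a) (h2 : χ a ≤ (r:ℤ) - 1) :
    CompOf χ a ∈ Pchi r χ := ⟨a, h1, h2, rfl⟩

abbrev PS (r : ℕ) (χ : Pt → ℤ) := {p : Set Pt // p ∈ Pchi r χ}

abbrev RI (r : ℕ) (χ : Pt → ℤ) : PS r χ → PS r χ → Prop := fun u v => Ichi χ u.1 v.1

lemma chain_aux (r : ℕ) (hmono : ∀ a b : Pt, a ≤ b → χ b ≤ χ a) :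
    ∀ n (a b : Pt), (b 0 - a 0) + (b 1 - a 1) = n → a ≤ b →
    χ b < χ a → 1 ≤ χ b → χ a ≤ (r:ℤ) - 1 →
    ∀ (hma : CompOf χ a ∈ Pchi r χ) (hmb : CompOf χ b ∈ Pchi r χ),
    Relation.TransGen (RI r χ) ⟨_, hma⟩ ⟨_, hmb⟩ := by
  intro n
  induction n with
  | zero =>
    intro a b hn hle hlt _ _ _ _
    have h0 : a 0 ≤ b 0 := hle 0
    have h1 : a 1 ≤ b 1 := hle 1
    have : a = b := le_antisymm hle (le_of_coords (by omega) (by omega))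
    rw [this] at hlt
    exact absurd hlt (by omega)
  | succ n ih =>
    intro a b hn hle hlt hb1 har hma hmb
    have hi : a 0 < b 0 ∨ a 1 < b 1 := by
      have h0 : a 0 ≤ b 0 := hle 0
      have h1 : a 1 ≤ b 1 := hle 1
      by_contra hcon
      push_neg at hcon
      omega
    obtain ⟨i, hi⟩ : ∃ i, a i < b i := by
      rcases hi with h | h
      · exact ⟨0, h⟩
      · exact ⟨1, h⟩
    obtain ⟨a', e0, hadj, hle1, hle2⟩ :
        ∃ a' : Pt, a' 0 + a' 1 = a 0 + a 1 + 1 ∧ GridAdj a a' ∧ a ≤ a' ∧ a' ≤ b :=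
      ⟨Function.update a i (a i + 1), update_coords a i, adj_update a i,
        le_update a i, update_le i hle hi⟩
    have hmeas : (b 0 - a' 0) + (b 1 - a' 1) = n := by
      have h0 : a 0 ≤ b 0 := hle 0
      have h1 : a 1 ≤ b 1 := hle 1
      have h0' : a' 0 ≤ b 0 := hle2 0
      have h1' : a' 1 ≤ b 1 := hle2 1
      omega
    have hq1 : χ a' ≤ χ a := hmono _ _ hle1
    have hq2 : χ b ≤ χ a' := hmono _ _ hle2
    by_cases hva : χ a' = χ a
    · have hcomp : CompOf χ a = CompOf χ a' :=
        (compOf_eq_of_mem (Relation.ReflTransGen.single ⟨hadj, rfl, hva⟩)).symm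
      have hma' : CompOf χ a' ∈ Pchi r χ := hcomp ▸ hma
      have heq : (⟨CompOf χ a, hma⟩ : PS r χ) = ⟨CompOf χ a', hma'⟩ := Subtype.ext hcomp
      rw [heq]
      exact ih a' b hmeas hle2 (by omega) hb1 (by omega) hma' hmb
    · have hlt' : χ a' < χ a := lt_of_le_of_ne hq1 hva
      have hma' : CompOf χ a' ∈ Pchi r χ :=
        mem_Pchi_compOf r (le_trans hb1 hq2) (le_trans hq1 har)
      have edge : RI r χ ⟨CompOf χ a, hma⟩ ⟨CompOf χ a', hma'⟩ :=
        ⟨a, mem_compOf_self χ a, a', mem_compOf_self χ a', hadj, hle1, hlt'⟩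
      by_cases hvb : χ a' = χ b
      · have hcomp : CompOf χ a' = CompOf χ b := compOf_eq_of_le hmono hle2 hvb
        have heq : (⟨CompOf χ a', hma'⟩ : PS r χ) = ⟨CompOf χ b, hmb⟩ := Subtype.ext hcomp
        rw [← heq]
        exact Relation.TransGen.single edge
      · exact Relation.TransGen.head edge
          (ih a' b hmeas hle2 (lt_of_le_of_ne hq2 (Ne.symm hvb)) hb1 (le_trans hq1 har) hma' hmb)

/-- chain lemma: comparable points with a value drop give a `TransGen` chain of incidences -/
lemma chain (r : ℕ) (hmono : ∀ a b : Pt, a ≤ b → χ b ≤ χ a) {a b : Pt} (hle : a ≤ b)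
    (hlt : χ b < χ a) (hb1 : 1 ≤ χ b) (har : χ a ≤ (r:ℤ) - 1)
    (hma : CompOf χ a ∈ Pchi r χ) (hmb : CompOf χ b ∈ Pchi r χ) :
    Relation.TransGen (RI r χ) ⟨_, hma⟩ ⟨_, hmb⟩ :=
  chain_aux r hmono _ a b rfl hle hlt hb1 har hma hmb

lemma comp_finite (hfin : (Function.support χ).Finite) {a : Pt} (h1 : 1 ≤ χ a) :
    (CompOf χ a).Finite := by
  refine hfin.subset (fun z hz => ?_)
  have := val_eq_of_mem hz
  simp only [Function.mem_support]
  intro h0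
  rw [h0] at this
  omega

end chain

end St6

namespace St6

section bwd

variable {r : ℕ} (S : IncStruct (r - 1)) [Fintype S.P] (xE yE : S.P → ℝ)

/-- all interval endpoints -/
noncomputable def Vf : Finset ℝ := (Finset.univ.image xE) ∪ (Finset.univ.image yE)

/-- order-preserving discretization of the endpoints, multiples of `8N` -/
noncomputable def ff (v : ℝ) : ℤ :=
  8 * (Fintype.card S.P) * (((Vf S xE yE).filter (fun w => w ≤ v)).card : ℤ)

/-- an enumeration of `S.P` by `1, …, N` -/
noncomputable def idx (p : S.P) : ℕ := ((Fintype.equivFin S.P) p : ℕ) + 1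

/-- left endpoints of the discretized intervals -/
noncomputable def AA (p : S.P) : ℤ := ff S xE yE (xE p) - 2 * idx S p

/-- right endpoints of the discretized intervals -/
noncomputable def BB (p : S.P) : ℤ := ff S xE yE (yE p) + 2 * idx S p

/-- the level of `p` : `r - deg p` -/
def vv (p : S.P) : ℕ := r - S.deg p

/-- threshold of the staircase drop contributed by `p` at stage `w` -/
noncomputable def ττ (w : ℕ) (p : S.P) : ℤ :=
  if w ≤ vv S p then BB S xE yE p else AA S xE yE p - 1

/-- depth of the `w`-th staircase on diagonal `c` -/
noncomputable def NN (w : ℕ) (c : ℤ) : ℕ :=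
  (Finset.univ.filter (fun p => c ≤ ττ S xE yE w p)).card

/-- the characteristic function -/
noncomputable def chiF : Pt → ℤ := fun a =>
  if a 1 ≤ a 0 then
    (((Finset.Icc 1 r).filter
      (fun w => (a 1 : ℤ) < NN S xE yE w ((a 0 : ℤ) - (a 1 : ℤ)))).card : ℤ)
  else (if a 1 < Fintype.card S.P then (r : ℤ) else 0)

lemma idx_le (p : S.P) : 1 ≤ idx S p ∧ idx S p ≤ Fintype.card S.P := by
  unfold idx
  have := ((Fintype.equivFin S.P) p).2
  omega

lemma idx_inj {p q : S.P} (h : idx S p = idx S q) : p = q := by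
  unfold idx at h
  have : ((Fintype.equivFin S.P) p) = ((Fintype.equivFin S.P) q) := Fin.ext (by omega)
  exact (Fintype.equivFin S.P).injective this

lemma ff_mono {u v : ℝ} (h : u ≤ v) : ff S xE yE u ≤ ff S xE yE v := by
  unfold ff
  have hsub : (Vf S xE yE).filter (fun w => w ≤ u) ⊆ (Vf S xE yE).filter (fun w => w ≤ v) :=
    fun w hw => Finset.mem_filter.2
      ⟨(Finset.mem_filter.1 hw).1, le_trans (Finset.mem_filter.1 hw).2 h⟩
  have hc := Finset.card_le_card hsub
  have h8 : (0:ℤ) ≤ 8 * (Fintype.card S.P) := by positivity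
  nlinarith [hc]

lemma ff_strict {u v : ℝ} (hv : v ∈ Vf S xE yE) (h : u < v) :
    ff S xE yE u + 8 * (Fintype.card S.P) ≤ ff S xE yE v := by
  unfold ff
  have hsub : (Vf S xE yE).filter (fun w => w ≤ u) ⊂ (Vf S xE yE).filter (fun w => w ≤ v) := by
    refine (Finset.ssubset_iff_of_subset (fun w hw => Finset.mem_filter.2
      ⟨(Finset.mem_filter.1 hw).1, le_trans (Finset.mem_filter.1 hw).2 h.le⟩)).2 ?_
    exact ⟨v, Finset.mem_filter.2 ⟨hv, le_refl v⟩,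
      fun hc => absurd (Finset.mem_filter.1 hc).2 (not_le.2 h)⟩
  have hc := Finset.card_lt_card hsub
  have h8 : (0:ℤ) ≤ 8 * (Fintype.card S.P) := by positivity
  nlinarith [hc]

lemma xE_mem (p : S.P) : xE p ∈ Vf S xE yE :=
  Finset.mem_union_left _ (Finset.mem_image_of_mem _ (Finset.mem_univ p))

lemma yE_mem (p : S.P) : yE p ∈ Vf S xE yE :=
  Finset.mem_union_right _ (Finset.mem_image_of_mem _ (Finset.mem_univ p))

lemma ff_pos {v : ℝ} (hv : v ∈ Vf S xE yE) : 8 * (Fintype.card S.P : ℤ) ≤ ff S xE yE v := by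
  unfold ff
  have h1 : 1 ≤ ((Vf S xE yE).filter (fun w => w ≤ v)).card :=
    Finset.card_pos.2 ⟨v, Finset.mem_filter.2 ⟨hv, le_refl v⟩⟩
  have h8 : (0:ℤ) ≤ 8 * (Fintype.card S.P) := by positivity
  nlinarith [h1]

lemma AA_pos (p : S.P) : 1 ≤ AA S xE yE p := by
  have h1 := ff_pos S xE yE (xE_mem S xE yE p)
  have h2 := idx_le S p
  have hN : 1 ≤ Fintype.card S.P := Fintype.card_pos_iff.2 ⟨p⟩
  unfold AA
  omega

lemma AA_le_BB (hxy : ∀ p, xE p ≤ yE p) (p : S.P) : AA S xE yE p ≤ BB S xE yE p := by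
  have h1 := ff_mono S xE yE (hxy p)
  have h2 := idx_le S p
  unfold AA BB
  omega

lemma AA_even (p : S.P) : ∃ k, AA S xE yE p = 2 * k := by
  unfold AA ff
  exact ⟨4 * (Fintype.card S.P) * (((Vf S xE yE).filter (fun w => w ≤ xE p)).card : ℤ)
    - idx S p, by ring⟩

lemma BB_even (p : S.P) : ∃ k, BB S xE yE p = 2 * k := by
  unfold BB ff
  exact ⟨4 * (Fintype.card S.P) * (((Vf S xE yE).filter (fun w => w ≤ yE p)).card : ℤ)
    + idx S p, by ring⟩

lemma BB_inj {p q : S.P} (h : BB S xE yE p = BB S xE yE q) : p = q := by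
  have hN : 1 ≤ Fintype.card S.P := Fintype.card_pos_iff.2 ⟨p⟩
  have hd : (8 * (Fintype.card S.P) : ℤ) ∣ (2 * idx S p - 2 * idx S q) :=
    ⟨(((Vf S xE yE).filter (fun w => w ≤ yE q)).card : ℤ) -
      (((Vf S xE yE).filter (fun w => w ≤ yE p)).card : ℤ), by
        unfold BB ff at h
        linarith [h]⟩
  have h1 := idx_le S p
  have h2 := idx_le S q
  have h0 : (2 * (idx S p : ℤ) - 2 * idx S q) = 0 :=
    Int.eq_zero_of_abs_lt_dvd hd (abs_lt.2 (by constructor <;> omega))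
  exact idx_inj S (by omega)

lemma AA_inj {p q : S.P} (h : AA S xE yE p = AA S xE yE q) : p = q := by
  have hN : 1 ≤ Fintype.card S.P := Fintype.card_pos_iff.2 ⟨p⟩
  have hd : (8 * (Fintype.card S.P) : ℤ) ∣ (2 * idx S q - 2 * idx S p) :=
    ⟨(((Vf S xE yE).filter (fun w => w ≤ xE q)).card : ℤ) -
      (((Vf S xE yE).filter (fun w => w ≤ xE p)).card : ℤ), by
        unfold AA ff at h
        linarith [h]⟩
  have h1 := idx_le S p
  have h2 := idx_le S q
  have h0 : (2 * (idx S q : ℤ) - 2 * idx S p) = 0 :=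
    Int.eq_zero_of_abs_lt_dvd hd (abs_lt.2 (by constructor <;> omega))
  exact idx_inj S (by omega)

lemma AA_ne_BB (p q : S.P) : AA S xE yE p - 1 ≠ BB S xE yE q := by
  intro h
  obtain ⟨k1, hk1⟩ := AA_even S xE yE p
  obtain ⟨k2, hk2⟩ := BB_even S xE yE q
  omega

/-- transfer of interval intersection to the discretized intervals -/
lemma inter_iff (hxy : ∀ p, xE p ≤ yE p) (p q : S.P) :
    (Set.Icc (xE p) (yE p) ∩ Set.Icc (xE q) (yE q)).Nonempty ↔
      (AA S xE yE q ≤ BB S xE yE p ∧ AA S xE yE p ≤ BB S xE yE q) := by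
  have hreal : (Set.Icc (xE p) (yE p) ∩ Set.Icc (xE q) (yE q)).Nonempty ↔
      (xE q ≤ yE p ∧ xE p ≤ yE q) := by
    constructor
    · rintro ⟨z, ⟨h1, h2⟩, ⟨h3, h4⟩⟩
      exact ⟨by linarith, by linarith⟩
    · rintro ⟨h1, h2⟩
      exact ⟨max (xE p) (xE q), ⟨⟨le_max_left _ _, max_le (hxy p) h1⟩,
        ⟨le_max_right _ _, max_le h2 (hxy q)⟩⟩⟩
  rw [hreal]
  have hip := idx_le S p
  have hiq := idx_le S q
  constructor
  · rintro ⟨h1, h2⟩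
    have e1 := ff_mono S xE yE h1
    have e2 := ff_mono S xE yE h2
    unfold AA BB
    omega
  · rintro ⟨h1, h2⟩
    constructor
    · by_contra hcon
      push_neg at hcon
      have := ff_strict S xE yE (xE_mem S xE yE q) hcon
      unfold AA BB at h1
      omega
    · by_contra hcon
      push_neg at hcon
      have := ff_strict S xE yE (xE_mem S xE yE p) hcon
      unfold AA BB at h2
      omega

/-- disjoint intervals have a gap of at least `2` after discretization -/
lemma gap_of_disj (hxy : ∀ p, xE p ≤ yE p) (p q : S.P)
    (h : ¬ (Set.Icc (xE p) (yE p) ∩ Set.Icc (xE q) (yE q)).Nonempty) :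
    BB S xE yE p + 2 ≤ AA S xE yE q ∨ BB S xE yE q + 2 ≤ AA S xE yE p := by
  have hN : 1 ≤ Fintype.card S.P := Fintype.card_pos_iff.2 ⟨p⟩
  have hor : yE p < xE q ∨ yE q < xE p := by
    by_contra hcon
    push_neg at hcon
    exact h ⟨max (xE p) (xE q), ⟨⟨le_max_left _ _, max_le (hxy p) hcon.1⟩,
      ⟨le_max_right _ _, max_le hcon.2 (hxy q)⟩⟩⟩
  have hip := idx_le S p
  have hiq := idx_le S q
  rcases hor with h1 | h1
  · left
    have := ff_strict S xE yE (xE_mem S xE yE q) h1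
    unfold AA BB
    omega
  · right
    have := ff_strict S xE yE (xE_mem S xE yE p) h1
    unfold AA BB
    omega

end bwd

end St6

namespace St6

section bwd2

variable {r : ℕ} (S : IncStruct (r - 1)) [Fintype S.P] (xE yE : S.P → ℝ)

lemma NN_le_card (w : ℕ) (c : ℤ) : NN S xE yE w c ≤ Fintype.card S.P :=
  Finset.card_filter_le _ _

lemma NN_mono (w : ℕ) {c c' : ℤ} (h : c ≤ c') : NN S xE yE w c' ≤ NN S xE yE w c :=
  Finset.card_le_card (fun p hp => Finset.mem_filter.2
    ⟨Finset.mem_univ p, le_trans h (Finset.mem_filter.1 hp).2⟩)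

lemma ττ_inj (hxy : ∀ p, xE p ≤ yE p) (w : ℕ) {p q : S.P}
    (h : ττ S xE yE w p = ττ S xE yE w q) : p = q := by
  unfold ττ at h
  split_ifs at h with h1 h2 h2
  · exact BB_inj S xE yE h
  · exact absurd h.symm (AA_ne_BB S xE yE q p)
  · exact absurd (by omega : AA S xE yE p - 1 = BB S xE yE q) (AA_ne_BB S xE yE p q)
  · exact AA_inj S xE yE (by omega)

lemma NN_drop (hxy : ∀ p, xE p ≤ yE p) (w : ℕ) (c : ℤ) :
    NN S xE yE w c ≤ NN S xE yE w (c + 1) + 1 := by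
  classical
  have hsub : Finset.univ.filter (fun p => c ≤ ττ S xE yE w p) ⊆
      (Finset.univ.filter (fun p => c + 1 ≤ ττ S xE yE w p)) ∪
      (Finset.univ.filter (fun p => ττ S xE yE w p = c)) := by
    intro p hp
    have := (Finset.mem_filter.1 hp).2
    rcases eq_or_lt_of_le this with h | h
    · exact Finset.mem_union_right _ (Finset.mem_filter.2 ⟨Finset.mem_univ p,
        show ττ S xE yE w p = c from h.symm⟩)
    · exact Finset.mem_union_left _ (Finset.mem_filter.2 ⟨Finset.mem_univ p,
        show c + 1 ≤ ττ S xE yE w p by omega⟩)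
  have h1 := Finset.card_le_card hsub
  have h2 := Finset.card_union_le
    (Finset.univ.filter (fun p => c + 1 ≤ ττ S xE yE w p))
    (Finset.univ.filter (fun p => ττ S xE yE w p = c))
  have h3 : (Finset.univ.filter (fun p => ττ S xE yE w p = c)).card ≤ 1 := by
    refine Finset.card_le_one.2 (fun p hp q hq => ?_)
    have hp' := (Finset.mem_filter.1 hp).2
    have hq' := (Finset.mem_filter.1 hq).2
    exact ττ_inj S xE yE hxy w (hp'.trans hq'.symm)
  unfold NN
  omega

lemma ττ_anti (hxy : ∀ p, xE p ≤ yE p) {w w' : ℕ} (h : w ≤ w') (p : S.P) :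
    ττ S xE yE w' p ≤ ττ S xE yE w p := by
  unfold ττ
  split_ifs with h1 h2 h2
  · exact le_refl _
  · omega
  · have := AA_le_BB S xE yE hxy p
    omega
  · exact le_refl _

lemma NN_anti (hxy : ∀ p, xE p ≤ yE p) {w w' : ℕ} (h : w ≤ w') (c : ℤ) :
    NN S xE yE w' c ≤ NN S xE yE w c :=
  Finset.card_le_card (fun p hp => Finset.mem_filter.2 ⟨Finset.mem_univ p,
    le_trans (Finset.mem_filter.1 hp).2 (ττ_anti S xE yE hxy h p)⟩)

lemma NN_all (hxy : ∀ p, xE p ≤ yE p) (w : ℕ) {c : ℤ} (hc : c ≤ 0) :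
    NN S xE yE w c = Fintype.card S.P := by
  unfold NN
  rw [Finset.filter_true_of_mem, Finset.card_univ]
  intro p _
  have h1 := AA_pos S xE yE p
  have h2 := AA_le_BB S xE yE hxy p
  unfold ττ
  split_ifs <;> omega

lemma NN_strict (hxy : ∀ p, xE p ≤ yE p) {w : ℕ} {c : ℤ} {p : S.P} (hp : vv S p = w)
    (h1 : AA S xE yE p ≤ c) (h2 : c ≤ BB S xE yE p) :
    NN S xE yE (w + 1) c < NN S xE yE w c := by
  refine Finset.card_lt_card ?_
  have hsub : Finset.univ.filter (fun q => c ≤ ττ S xE yE (w + 1) q) ⊆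
      Finset.univ.filter (fun q => c ≤ ττ S xE yE w q) :=
    fun q hq => Finset.mem_filter.2 ⟨Finset.mem_univ q,
      le_trans (Finset.mem_filter.1 hq).2 (ττ_anti S xE yE hxy (by omega) q)⟩
  rw [Finset.ssubset_iff_of_subset hsub]
  refine ⟨p, Finset.mem_filter.2 ⟨Finset.mem_univ p,
    show c ≤ ττ S xE yE w p from ?_⟩, fun hc => ?_⟩
  · unfold ττ
    rw [if_pos (by omega)]
    exact h2
  · have hc' : c ≤ ττ S xE yE (w + 1) p := (Finset.mem_filter.1 hc).2
    unfold ττ at hc'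
    rw [if_neg (by omega)] at hc'
    omega

lemma NN_exists (hxy : ∀ p, xE p ≤ yE p) {w : ℕ} {c : ℤ}
    (h : NN S xE yE (w + 1) c < NN S xE yE w c) :
    ∃ p, vv S p = w ∧ AA S xE yE p ≤ c ∧ c ≤ BB S xE yE p := by
  by_contra hcon
  push_neg at hcon
  have hsub : Finset.univ.filter (fun p => c ≤ ττ S xE yE w p) ⊆
      Finset.univ.filter (fun p => c ≤ ττ S xE yE (w + 1) p) := by
    intro p hp
    have hp' := (Finset.mem_filter.1 hp).2
    refine Finset.mem_filter.2 ⟨Finset.mem_univ p, ?_⟩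
    unfold ττ at hp' ⊢
    by_cases hv1 : w + 1 ≤ vv S p
    · rw [if_pos hv1]
      rwa [if_pos (by omega)] at hp'
    · rw [if_neg hv1]
      by_cases hv2 : w ≤ vv S p
      · rw [if_pos hv2] at hp'
        have hvv : vv S p = w := by omega
        have := hcon p hvv
        omega
      · rwa [if_neg hv2] at hp'
  have := Finset.card_le_card hsub
  unfold NN at h
  omega

end bwd2

end St6

namespace St6

section bwd3

variable {r : ℕ} (S : IncStruct (r - 1)) [Fintype S.P] (xE yE : S.P → ℝ)

lemma chiF_right {a : Pt} (h : a 1 ≤ a 0) :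
    chiF S xE yE a = (((Finset.Icc 1 r).filter
      (fun w => (a 1 : ℤ) < NN S xE yE w (tc a))).card : ℤ) := by
  unfold chiF tc
  rw [if_pos h]

lemma chiF_left {a : Pt} (h : ¬ a 1 ≤ a 0) :
    chiF S xE yE a = (if a 1 < Fintype.card S.P then (r : ℤ) else 0) := by
  unfold chiF
  rw [if_neg h]

/-- the level of a point in the right region, characterized by the staircase depths -/
lemma chiF_lvl (hxy : ∀ p, xE p ≤ yE p) {a : Pt} (h : a 1 ≤ a 0) {w : ℕ}
    (h1 : 1 ≤ w) (h2 : w < r) :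
    (chiF S xE yE a = (w : ℤ) ↔
      ((a 1 : ℤ) < NN S xE yE w (tc a) ∧ (NN S xE yE (w + 1) (tc a) : ℤ) ≤ (a 1 : ℤ))) := by
  rw [chiF_right S xE yE h]
  rw [show ((((Finset.Icc 1 r).filter
      (fun w => (a 1 : ℤ) < NN S xE yE w (tc a))).card : ℤ) = (w:ℤ)) ↔
      (((Finset.Icc 1 r).filter
      (fun w => (a 1 : ℤ) < NN S xE yE w (tc a))).card = w) from Nat.cast_inj]
  constructor
  · intro hcard
    constructor
    · by_contra hP
      push_neg at hP
      have hsub : (Finset.Icc 1 r).filter (fun u => (a 1 : ℤ) < NN S xE yE u (tc a)) ⊆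
          Finset.Icc 1 (w - 1) := by
        intro u hu
        obtain ⟨hu1, hu2⟩ := Finset.mem_filter.1 hu
        rw [Finset.mem_Icc] at hu1 ⊢
        refine ⟨hu1.1, ?_⟩
        by_contra hc
        push_neg at hc
        have : (NN S xE yE u (tc a) : ℤ) ≤ NN S xE yE w (tc a) := by
          exact_mod_cast NN_anti S xE yE hxy (by omega) (tc a)
        omega
      have := Finset.card_le_card hsub
      rw [Nat.card_Icc] at this
      omega
    · by_contra hP
      push_neg at hP
      have hsub : Finset.Icc 1 (w + 1) ⊆
          (Finset.Icc 1 r).filter (fun u => (a 1 : ℤ) < NN S xE yE u (tc a)) := by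
        intro u hu
        rw [Finset.mem_Icc] at hu
        refine Finset.mem_filter.2 ⟨Finset.mem_Icc.2 ⟨hu.1, by omega⟩, ?_⟩
        show (a 1 : ℤ) < NN S xE yE u (tc a)
        have : (NN S xE yE (w + 1) (tc a) : ℤ) ≤ NN S xE yE u (tc a) := by
          exact_mod_cast NN_anti S xE yE hxy (by omega) (tc a)
        omega
      have := Finset.card_le_card hsub
      rw [Nat.card_Icc] at this
      omega
  · rintro ⟨hP, hnP⟩
    have : (Finset.Icc 1 r).filter (fun u => (a 1 : ℤ) < NN S xE yE u (tc a)) =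
        Finset.Icc 1 w := by
      ext u
      rw [Finset.mem_filter, Finset.mem_Icc, Finset.mem_Icc]
      constructor
      · rintro ⟨⟨hu1, hu2⟩, hu3⟩
        refine ⟨hu1, ?_⟩
        by_contra hc
        push_neg at hc
        have : (NN S xE yE u (tc a) : ℤ) ≤ NN S xE yE (w + 1) (tc a) := by
          exact_mod_cast NN_anti S xE yE hxy (by omega) (tc a)
        omega
      · rintro ⟨hu1, hu2⟩
        refine ⟨Finset.mem_Icc.1 (Finset.mem_Icc.2 ⟨hu1, by omega⟩), ?_⟩
        show (a 1 : ℤ) < NN S xE yE u (tc a)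
        have : (NN S xE yE w (tc a) : ℤ) ≤ NN S xE yE u (tc a) := by
          exact_mod_cast NN_anti S xE yE hxy hu2 (tc a)
        omega
    rw [this, Nat.card_Icc]
    omega

/-- bounds for `chiF` -/
lemma chiF_bnd (a : Pt) : 0 ≤ chiF S xE yE a ∧ chiF S xE yE a ≤ (r : ℤ) := by
  by_cases h : a 1 ≤ a 0
  · rw [chiF_right S xE yE h]
    constructor
    · positivity
    · have := Finset.card_le_card (Finset.filter_subset
        (fun w => (a 1 : ℤ) < NN S xE yE w (tc a)) (Finset.Icc 1 r))
      rw [Nat.card_Icc] at this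
      exact_mod_cast (by omega : (Finset.filter
        (fun w => (a 1 : ℤ) < NN S xE yE w (tc a)) (Finset.Icc 1 r)).card ≤ r)
  · rw [chiF_left S xE yE h]
    split_ifs <;> constructor <;> simp

/-- first step of antitonicity -/
lemma chiF_step0 (hxy : ∀ p, xE p ≤ yE p) (a b : Pt) (h0 : b 0 = a 0 + 1)
    (h1 : b 1 = a 1) : chiF S xE yE b ≤ chiF S xE yE a := by
  by_cases ha : a 1 ≤ a 0
  · have hb : b 1 ≤ b 0 := by omega
    rw [chiF_right S xE yE hb, chiF_right S xE yE ha]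
    have htc : tc b = tc a + 1 := by unfold tc; omega
    have hsub : (Finset.Icc 1 r).filter (fun w => (b 1 : ℤ) < NN S xE yE w (tc b)) ⊆
        (Finset.Icc 1 r).filter (fun w => (a 1 : ℤ) < NN S xE yE w (tc a)) := by
      intro u hu
      obtain ⟨hu1, hu2⟩ := Finset.mem_filter.1 hu
      refine Finset.mem_filter.2 ⟨hu1, show (a 1 : ℤ) < NN S xE yE u (tc a) from ?_⟩
      have := NN_mono S xE yE u (show tc a ≤ tc b by omega)
      have hcast : (NN S xE yE u (tc b) : ℤ) ≤ NN S xE yE u (tc a) := by exact_mod_cast this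
      omega
    exact_mod_cast Finset.card_le_card hsub
  · by_cases hb : b 1 ≤ b 0
    · have hd : tc b = 0 := by unfold tc; omega
      rw [chiF_right S xE yE hb, chiF_left S xE yE ha]
      by_cases hy : a 1 < Fintype.card S.P
      · rw [if_pos hy]
        have := Finset.card_le_card (Finset.filter_subset
          (fun w => (b 1 : ℤ) < NN S xE yE w (tc b)) (Finset.Icc 1 r))
        rw [Nat.card_Icc] at this
        exact_mod_cast (by omega : (Finset.filter
          (fun w => (b 1 : ℤ) < NN S xE yE w (tc b)) (Finset.Icc 1 r)).card ≤ r)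
      · rw [if_neg hy]
        have hemp : (Finset.Icc 1 r).filter (fun w => (b 1 : ℤ) < NN S xE yE w (tc b)) = ∅ := by
          refine Finset.filter_false_of_mem (fun u hu => ?_)
          have hc : (NN S xE yE u (tc b) : ℤ) ≤ (Fintype.card S.P : ℤ) := by
            exact_mod_cast NN_le_card S xE yE u (tc b)
          omega
        rw [hemp]
        simp
    · rw [chiF_left S xE yE ha, chiF_left S xE yE hb, h1]

/-- second step of antitonicity -/
lemma chiF_step1 (hxy : ∀ p, xE p ≤ yE p) (a b : Pt) (h0 : b 0 = a 0)
    (h1 : b 1 = a 1 + 1) : chiF S xE yE b ≤ chiF S xE yE a := by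
  by_cases hb : b 1 ≤ b 0
  · have ha : a 1 ≤ a 0 := by omega
    rw [chiF_right S xE yE hb, chiF_right S xE yE ha]
    have hsub : (Finset.Icc 1 r).filter (fun w => (b 1 : ℤ) < NN S xE yE w (tc b)) ⊆
        (Finset.Icc 1 r).filter (fun w => (a 1 : ℤ) < NN S xE yE w (tc a)) := by
      intro u hu
      obtain ⟨hu1, hu2⟩ := Finset.mem_filter.1 hu
      refine Finset.mem_filter.2 ⟨hu1, show (a 1 : ℤ) < NN S xE yE u (tc a) from ?_⟩
      have hdrop := NN_drop S xE yE hxy u (tc b)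
      have heq : tc b + 1 = tc a := by unfold tc; omega
      rw [heq] at hdrop
      have hcast : (NN S xE yE u (tc b) : ℤ) ≤ (NN S xE yE u (tc a) : ℤ) + 1 := by
        exact_mod_cast hdrop
      omega
    exact_mod_cast Finset.card_le_card hsub
  · by_cases ha : a 1 ≤ a 0
    · -- here a 0 = a 1, so tc a = 0
      have hd : tc a = 0 := by unfold tc; omega
      rw [chiF_left S xE yE hb, chiF_right S xE yE ha]
      by_cases hy : b 1 < Fintype.card S.P
      · rw [if_pos hy]
        have hfull : (Finset.Icc 1 r).filter (fun w => (a 1 : ℤ) < NN S xE yE w (tc a)) =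
            Finset.Icc 1 r := by
          refine Finset.filter_true_of_mem (fun u hu => ?_)
          show (a 1 : ℤ) < NN S xE yE u (tc a)
          rw [NN_all S xE yE hxy u (le_of_eq hd)]
          exact_mod_cast (by omega : a 1 < Fintype.card S.P)
        rw [hfull, Nat.card_Icc]
        exact_mod_cast (by omega : r ≤ r + 1 - 1)
      · rw [if_neg hy]
        positivity
    · rw [chiF_left S xE yE hb, chiF_left S xE yE ha]
      have hr0 : (0:ℤ) ≤ r := by positivity
      split_ifs with hh1 hh2 hh2 <;> omega

/-- `chiF` is antitone -/
lemma chiF_anti (hxy : ∀ p, xE p ≤ yE p) :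
    ∀ a b : Pt, a ≤ b → chiF S xE yE b ≤ chiF S xE yE a := by
  have key : ∀ n (a b : Pt), (b 0 - a 0) + (b 1 - a 1) = n → a ≤ b →
      chiF S xE yE b ≤ chiF S xE yE a := by
    intro n
    induction n with
    | zero =>
      intro a b hn hle
      have h0 : a 0 ≤ b 0 := hle 0
      have h1 : a 1 ≤ b 1 := hle 1
      have : a = b := le_antisymm hle (le_of_coords (by omega) (by omega))
      rw [this]
    | succ n ih =>
      intro a b hn hle
      have hi : a 0 < b 0 ∨ a 1 < b 1 := by
        have h0 : a 0 ≤ b 0 := hle 0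
        have h1 : a 1 ≤ b 1 := hle 1
        by_contra hcon
        push_neg at hcon
        omega
      obtain ⟨i, hi⟩ : ∃ i, a i < b i := by
        rcases hi with h | h
        · exact ⟨0, h⟩
        · exact ⟨1, h⟩
      obtain ⟨a', e0, e1, hle1, hle2⟩ :
          ∃ a' : Pt, ((a' 0 = a 0 + 1 ∧ a' 1 = a 1) ∨ (a' 0 = a 0 ∧ a' 1 = a 1 + 1)) ∧
            a' 0 + a' 1 = a 0 + a 1 + 1 ∧ a ≤ a' ∧ a' ≤ b := by
        refine ⟨Function.update a i (a i + 1), ?_, update_coords a i,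
          le_update a i, update_le i hle hi⟩
        rcases fin2cases i with rfl | rfl
        · left
          rw [Function.update_self, Function.update_of_ne (by decide : (1 : Fin 2) ≠ 0)]
          exact ⟨rfl, rfl⟩
        · right
          rw [Function.update_self, Function.update_of_ne (by decide : (0 : Fin 2) ≠ 1)]
          exact ⟨rfl, rfl⟩
      have hstep : chiF S xE yE a' ≤ chiF S xE yE a := by
        rcases e0 with ⟨e0, e0'⟩ | ⟨e0, e0'⟩
        · exact chiF_step0 S xE yE hxy a a' e0 e0'
        · exact chiF_step1 S xE yE hxy a a' e0 e0'
      have hmeas : (b 0 - a' 0) + (b 1 - a' 1) = n := by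
        have h0 : a 0 ≤ b 0 := hle 0
        have h1 : a 1 ≤ b 1 := hle 1
        have h0' : a' 0 ≤ b 0 := hle2 0
        have h1' : a' 1 ≤ b 1 := hle2 1
        omega
      exact le_trans (ih a' b hmeas hle2) hstep
  exact fun a b hle => key _ a b rfl hle

/-- `chiF` has finite support -/
lemma chiF_supp (hxy : ∀ p, xE p ≤ yE p) :
    (Function.support (chiF S xE yE)).Finite := by
  classical
  set N := Fintype.card S.P with hN
  set KB : ℤ := 8 * N * (Vf S xE yE).card + 2 * N with hKB
  have hBle : ∀ p, BB S xE yE p ≤ KB := by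
    intro p
    have h1 : ((Vf S xE yE).filter (fun w => w ≤ yE p)).card ≤ (Vf S xE yE).card :=
      Finset.card_le_card (Finset.filter_subset _ _)
    have h2 := idx_le S p
    have h8 : (0:ℤ) ≤ 8 * N := by positivity
    unfold BB ff
    rw [hKB, hN]
    nlinarith [h1, h2.2]
  have hττle : ∀ w p, ττ S xE yE w p ≤ KB := by
    intro w p
    have h1 := hBle p
    have h2 := AA_le_BB S xE yE hxy p
    unfold ττ
    split_ifs <;> omega
  have hKB0 : 0 ≤ KB := by positivity
  set Kn : ℕ := (KB + N).toNat + N with hKn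
  have hsub : Function.support (chiF S xE yE) ⊆
      Set.univ.pi (fun _ : Fin 2 => Set.Iic Kn) := by
    intro a ha
    rw [Function.mem_support] at ha
    have hbound : a 0 ≤ Kn ∧ a 1 ≤ Kn := by
      by_cases h : a 1 ≤ a 0
      · rw [chiF_right S xE yE h] at ha
        have hne : ((Finset.Icc 1 r).filter
            (fun w => (a 1 : ℤ) < NN S xE yE w (tc a))).Nonempty := by
          rw [Finset.nonempty_iff_ne_empty]
          intro hc
          rw [hc] at ha
          simp at ha
        obtain ⟨u, hu⟩ := hne
        have hu2 : (a 1 : ℤ) < NN S xE yE u (tc a) := (Finset.mem_filter.1 hu).2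
        have hNle : NN S xE yE u (tc a) ≤ N := NN_le_card S xE yE u (tc a)
        have hNne : (Finset.univ.filter (fun p => tc a ≤ ττ S xE yE u p)).Nonempty := by
          rw [← Finset.card_pos]
          have : (0:ℤ) < NN S xE yE u (tc a) := by
            have := (a 1).cast_nonneg (α := ℤ)
            omega
          unfold NN at this
          exact_mod_cast this
        obtain ⟨p, hp⟩ := hNne
        have htcle : tc a ≤ KB := le_trans (Finset.mem_filter.1 hp).2 (hττle u p)
        have h1K : (a 1 : ℤ) ≤ N := by
          have : (NN S xE yE u (tc a) : ℤ) ≤ N := by exact_mod_cast hNle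
          omega
        have h0K : (a 0 : ℤ) ≤ KB + N := by
          unfold tc at htcle
          omega
        constructor
        · have : (a 0 : ℤ) ≤ ((KB + N).toNat : ℤ) := by
            rw [Int.toNat_of_nonneg (by omega)]
            exact h0K
          rw [hKn]
          omega
        · rw [hKn]
          omega
      · rw [chiF_left S xE yE h] at ha
        have hy : a 1 < N := by
          by_contra hc
          rw [if_neg hc] at ha
          exact ha rfl
        rw [hKn]
        omega
    intro i _
    rcases fin2cases i with rfl | rfl
    · exact hbound.1
    · exact hbound.2
  exact Set.Finite.subset (Set.Finite.pi (fun _ => Set.finite_Iic Kn)) hsub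

/-- construction of a point at a prescribed level and diagonal -/
lemma chiF_pt (hxy : ∀ p, xE p ≤ yE p) {w : ℕ} {c : ℤ} (h1 : 1 ≤ w) (h2 : w < r)
    (hc : 1 ≤ c) (hstrict : NN S xE yE (w + 1) c < NN S xE yE w c) :
    ∃ a : Pt, chiF S xE yE a = (w : ℤ) ∧ tc a = c ∧ a 1 ≤ a 0 := by
  refine ⟨![c.toNat + NN S xE yE (w + 1) c, NN S xE yE (w + 1) c], ?_, ?_, ?_⟩
  · rw [chiF_lvl S xE yE hxy (show _ ≤ _ by simp) h1 h2]
    have htc : tc ![c.toNat + NN S xE yE (w + 1) c, NN S xE yE (w + 1) c] = c := by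
      unfold tc
      simp only [Matrix.cons_val_zero, Matrix.cons_val_one, Matrix.head_cons]
      push_cast [Int.toNat_of_nonneg (by omega : (0:ℤ) ≤ c)]
      ring
    rw [htc]
    simp only [Matrix.cons_val_one, Matrix.head_cons]
    constructor
    · exact_mod_cast hstrict
    · exact le_refl _
  · unfold tc
    simp only [Matrix.cons_val_zero, Matrix.cons_val_one, Matrix.head_cons]
    push_cast [Int.toNat_of_nonneg (by omega : (0:ℤ) ≤ c)]
    ring
  · simp

end bwd3

end St6

namespace St6

section bwd4

variable {r : ℕ} (S : IncStruct (r - 1)) [Fintype S.P] (xE yE : S.P → ℝ)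

/-- any point of an intermediate level lies over some discretized interval -/
lemma chiF_pres (hxy : ∀ p, xE p ≤ yE p) (a : Pt) (w : ℕ) (h1 : 1 ≤ w) (h2 : w < r)
    (hval : chiF S xE yE a = (w : ℤ)) :
    ∃ q, vv S q = w ∧ AA S xE yE q ≤ tc a ∧ tc a ≤ BB S xE yE q ∧ a 1 ≤ a 0 := by
  have hreg : a 1 ≤ a 0 := by
    by_contra hcon
    rw [chiF_left S xE yE hcon] at hval
    split_ifs at hval <;> omega
  obtain ⟨hP, hnP⟩ := (chiF_lvl S xE yE hxy hreg h1 h2).1 hval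
  have hstrict : NN S xE yE (w + 1) (tc a) < NN S xE yE w (tc a) := by omega
  obtain ⟨q, hq1, hq2, hq3⟩ := NN_exists S xE yE hxy hstrict
  exact ⟨q, hq1, hq2, hq3, hreg⟩

/-- the diagonal range of the component over `p` is contained in `[A p, B p]` -/
lemma chiF_range (hxy : ∀ p, xE p ≤ yE p) (hvr : ∀ p : S.P, 1 ≤ vv S p ∧ vv S p < r)
    (hgapPQ : ∀ p q : S.P, p ≠ q → vv S p = vv S q →
      BB S xE yE p + 2 ≤ AA S xE yE q ∨ BB S xE yE q + 2 ≤ AA S xE yE p)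
    (p : S.P) (a0 : Pt) (hval : chiF S xE yE a0 = (vv S p : ℤ)) (htc : tc a0 = AA S xE yE p)
    {b : Pt} (hb : b ∈ CompOf (chiF S xE yE) a0) :
    AA S xE yE p ≤ tc b ∧ tc b ≤ BB S xE yE p := by
  have hvb : chiF S xE yE b = (vv S p : ℤ) := (val_eq_of_mem hb).trans hval
  have hAB := AA_le_BB S xE yE hxy p
  constructor
  · by_contra hcon
    push_neg at hcon
    obtain ⟨z, hz, htz⟩ := exists_tc_eq hb (AA S xE yE p - 1)
      (Or.inr ⟨by omega, by omega⟩)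
    have hvz : chiF S xE yE z = (vv S p : ℤ) := (val_eq_of_mem hz).trans hval
    obtain ⟨q, hq1, hq2, hq3, _⟩ := chiF_pres S xE yE hxy z (vv S p) (hvr p).1 (hvr p).2 hvz
    have hne : q ≠ p := by
      intro h
      rw [h] at hq2 hq3
      omega
    rcases hgapPQ q p hne (hq1.trans rfl) with h | h <;> omega
  · by_contra hcon
    push_neg at hcon
    obtain ⟨z, hz, htz⟩ := exists_tc_eq hb (BB S xE yE p + 1)
      (Or.inl ⟨by omega, by omega⟩)
    have hvz : chiF S xE yE z = (vv S p : ℤ) := (val_eq_of_mem hz).trans hval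
    obtain ⟨q, hq1, hq2, hq3, _⟩ := chiF_pres S xE yE hxy z (vv S p) (hvr p).1 (hvr p).2 hvz
    have hne : q ≠ p := by
      intro h
      rw [h] at hq2 hq3
      omega
    rcases hgapPQ q p hne (hq1.trans rfl) with h | h <;> omega

/-- conversely, every point of level `v p` over `[A p , B p]` lies in the component of `a0` -/
lemma chiF_conn (hxy : ∀ p, xE p ≤ yE p) (hvr : ∀ p : S.P, 1 ≤ vv S p ∧ vv S p < r)
    (p : S.P) (a0 : Pt) (hval : chiF S xE yE a0 = (vv S p : ℤ)) (htc : tc a0 = AA S xE yE p) :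
    ∀ b : Pt, chiF S xE yE b = (vv S p : ℤ) → AA S xE yE p ≤ tc b → tc b ≤ BB S xE yE p →
      b ∈ CompOf (chiF S xE yE) a0 := by
  have hanti := chiF_anti S xE yE hxy
  have key : ∀ (k : ℕ) (b : Pt), chiF S xE yE b = (vv S p : ℤ) →
      tc b = AA S xE yE p + k → tc b ≤ BB S xE yE p → b ∈ CompOf (chiF S xE yE) a0 := by
    intro k
    induction k with
    | zero =>
      intro b hvb htb _
      have hcomp := compOf_eq_of_tc hanti (hvb.trans hval.symm)
        (by omega) (by omega)
      rw [← hcomp]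
      exact mem_compOf_self _ b
    | succ k ih =>
      intro b hvb htb hble
      have hA1 := AA_pos S xE yE p
      have hstrict : NN S xE yE (vv S p + 1) (AA S xE yE p + k) <
          NN S xE yE (vv S p) (AA S xE yE p + k) :=
        NN_strict S xE yE hxy rfl (by omega) (by omega)
      obtain ⟨z, hz1, hz2, _⟩ := chiF_pt S xE yE hxy (hvr p).1 (hvr p).2
        (show (1:ℤ) ≤ AA S xE yE p + k by omega) hstrict
      have hzmem : z ∈ CompOf (chiF S xE yE) a0 := ih z hz1 hz2 (by omega)
      have hcomp : CompOf (chiF S xE yE) b = CompOf (chiF S xE yE) z :=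
        compOf_eq_of_tc hanti (hvb.trans hz1.symm) (by omega) (by omega)
      have hcomp2 := compOf_eq_of_mem hzmem
      rw [← hcomp2, ← hcomp]
      exact mem_compOf_self _ b
  intro b hvb hA hB
  have : tc b = AA S xE yE p + ((tc b - AA S xE yE p).toNat : ℤ) := by omega
  exact key _ b hvb this hB

end bwd4

end St6

namespace St6

lemma forward {r : ℕ} (hr : 1 ≤ r) (S : IncStruct (r - 1)) (χ : Pt → ℤ)
    (hch : IsCharFun r 2 χ) (heq : EquivToSchi r χ S) :
    ∃ I' : S.P → S.P → Prop,
        (∀ p q, I' p q → S.deg p < S.deg q) ∧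
        (∀ p q, Relation.TransGen S.I p q ↔ Relation.TransGen I' p q) ∧
        ∃ J : S.P → Set ℝ,
          (∀ p, ∃ x y : ℝ, x ≤ y ∧ J p = Set.Icc x y) ∧
          (∀ p q, p ≠ q → S.deg p = S.deg q → J p ∩ J q = ∅) ∧
          (∀ p q, S.deg p < S.deg q → (I' p q ↔ (J p ∩ J q).Nonempty)) := by
  obtain ⟨hbnd, hfin, hmono⟩ := hch
  obtain ⟨e, hdeg, hTG⟩ := heq
  classical
  -- witnesses for components
  have hw : ∀ u : PS r χ, ∃ a : Pt, 1 ≤ χ a ∧ χ a ≤ (r:ℤ) - 1 ∧ u.1 = CompOf χ a :=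
    fun u => u.2
  choose wit hw1 hw2 hw3 using hw
  have hwmem : ∀ u : PS r χ, wit u ∈ u.1 := by
    intro u; rw [hw3]; exact mem_compOf_self χ (wit u)
  have hvalmem : ∀ (u : PS r χ) a, a ∈ u.1 → χ a = χ (wit u) := by
    intro u a ha; rw [hw3] at ha; exact val_eq_of_mem ha
  have hfinU : ∀ u : PS r χ, u.1.Finite := by
    intro u; rw [hw3]; exact comp_finite hfin (hw1 u)
  -- min and max of the diagonal coordinate on each component
  have hmM : ∀ u : PS r χ, ∃ m M : ℤ, (∃ a ∈ u.1, tc a = m) ∧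
      (∃ a ∈ u.1, tc a = M) ∧ ∀ a ∈ u.1, m ≤ tc a ∧ tc a ≤ M := by
    intro u
    have hne : ((hfinU u).toFinset.image tc).Nonempty :=
      ⟨tc (wit u), Finset.mem_image.2 ⟨wit u, by simp [hwmem u], rfl⟩⟩
    refine ⟨Finset.min' _ hne, Finset.max' _ hne, ?_, ?_, ?_⟩
    · obtain ⟨a, ha, hta⟩ := Finset.mem_image.1 (Finset.min'_mem _ hne)
      exact ⟨a, by simpa using ha, hta⟩
    · obtain ⟨a, ha, hta⟩ := Finset.mem_image.1 (Finset.max'_mem _ hne)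
      exact ⟨a, by simpa using ha, hta⟩
    · intro a ha
      have hmem : tc a ∈ (hfinU u).toFinset.image tc :=
        Finset.mem_image.2 ⟨a, by simp [ha], rfl⟩
      exact ⟨Finset.min'_le _ _ hmem, Finset.le_max' _ _ hmem⟩
  choose mB MB hmin hmax hbet using hmM
  have hmBle : ∀ u : PS r χ, mB u ≤ MB u := by
    intro u
    have := hbet u (wit u) (hwmem u)
    omega
  -- IVT : every diagonal between min and max is attained on the component
  have hIVT : ∀ (u : PS r χ) (c : ℤ), mB u ≤ c → c ≤ MB u → ∃ z ∈ u.1, tc z = c := by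
    intro u c h1 h2
    obtain ⟨a, ha, hta⟩ := hmin u
    obtain ⟨b, hb, htb⟩ := hmax u
    have hua : u.1 = CompOf χ a := by
      rw [hw3]
      exact (compOf_eq_of_mem (by rw [← hw3]; exact ha)).symm
    have hbmem : b ∈ CompOf χ a := by rw [← hua]; exact hb
    obtain ⟨z, hz, htz⟩ := exists_tc_eq hbmem c (Or.inl ⟨by omega, by omega⟩)
    exact ⟨z, by rw [hua]; exact hz, htz⟩
  -- the intervals
  set JP : S.P → Set ℝ :=
    fun p => Set.Icc ((mB (e.symm p) : ℝ) - 1/2) ((MB (e.symm p) : ℝ) + 1/2) with hJPdef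
  set I' : S.P → S.P → Prop :=
    fun p q => S.deg p < S.deg q ∧ (JP p ∩ JP q).Nonempty with hI'def
  -- nonempty intersection in terms of integer distances
  have hK1 : ∀ u w : PS r χ,
      ((JP (e u) ∩ JP (e w)).Nonempty ↔ (mB w ≤ MB u + 1 ∧ mB u ≤ MB w + 1)) := by
    intro u w
    simp only [hJPdef, Equiv.symm_apply_apply]
    constructor
    · rintro ⟨z, ⟨hz1, hz2⟩, ⟨hz3, hz4⟩⟩
      constructor
      · have : (mB w : ℝ) ≤ (MB u : ℝ) + 1 := by linarith
        exact_mod_cast this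
      · have : (mB u : ℝ) ≤ (MB w : ℝ) + 1 := by linarith
        exact_mod_cast this
    · rintro ⟨h1, h2⟩
      have h1' : (mB w : ℝ) ≤ (MB u : ℝ) + 1 := by exact_mod_cast h1
      have h2' : (mB u : ℝ) ≤ (MB w : ℝ) + 1 := by exact_mod_cast h2
      have hmu : (mB u : ℝ) ≤ (MB u : ℝ) := by exact_mod_cast hmBle u
      have hmw : (mB w : ℝ) ≤ (MB w : ℝ) := by exact_mod_cast hmBle w
      refine ⟨max ((mB u : ℝ) - 1/2) ((mB w : ℝ) - 1/2), ⟨⟨le_max_left _ _, ?_⟩,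
        ⟨le_max_right _ _, ?_⟩⟩⟩
      · apply max_le <;> linarith
      · apply max_le <;> linarith
  -- from close ranges, comparable points on the two components
  have hfind : ∀ u w : PS r χ, mB w ≤ MB u + 1 → mB u ≤ MB w + 1 →
      ∃ a ∈ u.1, ∃ b ∈ w.1, tc a ≤ tc b + 1 ∧ tc b ≤ tc a + 1 := by
    intro u w h1 h2
    by_cases hA : mB w ≤ MB u ∧ mB u ≤ MB w
    · obtain ⟨a, ha, hta⟩ := hIVT u (max (mB u) (mB w)) (le_max_left _ _)
        (max_le (hmBle u) hA.1)
      obtain ⟨b, hb, htb⟩ := hIVT w (max (mB u) (mB w)) (le_max_right _ _)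
        (max_le hA.2 (hmBle w))
      exact ⟨a, ha, b, hb, by omega⟩
    · push_neg at hA
      by_cases hB : mB w ≤ MB u
      · -- then MB w < mB u, so mB u = MB w + 1
        have hC := hA hB
        obtain ⟨a, ha, hta⟩ := hIVT u (mB u) le_rfl (hmBle u)
        obtain ⟨b, hb, htb⟩ := hIVT w (MB w) (hmBle w) le_rfl
        exact ⟨a, ha, b, hb, by omega⟩
      · push_neg at hB
        obtain ⟨a, ha, hta⟩ := hIVT u (MB u) (hmBle u) le_rfl
        obtain ⟨b, hb, htb⟩ := hIVT w (mB w) le_rfl (hmBle w)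
        exact ⟨a, ha, b, hb, by omega⟩
  -- degree in terms of values
  have hdeg' : ∀ u : PS r χ, (S.deg (e u) : ℤ) = (r:ℤ) - χ (wit u) :=
    fun u => hdeg u (wit u) (hwmem u)
  -- Ichi edge gives value drop and close ranges
  have hK2 : ∀ u w : PS r χ, Ichi χ u.1 w.1 →
      χ (wit w) < χ (wit u) ∧ mB w ≤ MB u + 1 ∧ mB u ≤ MB w + 1 := by
    rintro u w ⟨a, ha, b, hb, hadj, hle, hlt⟩
    have hva := hvalmem u a ha
    have hvb := hvalmem w b hb
    have htadj := tc_adj hadj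
    have hba := hbet u a ha
    have hbb := hbet w b hb
    exact ⟨by omega, by omega, by omega⟩
  -- value drop plus close ranges gives a TransGen chain
  have hK3 : ∀ u w : PS r χ, χ (wit w) < χ (wit u) → mB w ≤ MB u + 1 → mB u ≤ MB w + 1 →
      Relation.TransGen (RI r χ) u w := by
    intro u w hlt h1 h2
    obtain ⟨a, ha, b, hb, hd1, hd2⟩ := hfind u w h1 h2
    have hva := hvalmem u a ha
    have hvb := hvalmem w b hb
    have hltab : χ b < χ a := by omega
    have hle : a ≤ b := le_of_tc_of_lt hmono hltab hd1 hd2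
    have hma : CompOf χ a ∈ Pchi r χ := mem_Pchi_compOf r (by have := hw1 u; omega)
      (by have := hw2 u; omega)
    have hmb : CompOf χ b ∈ Pchi r χ := mem_Pchi_compOf r (by have := hw1 w; omega)
      (by have := hw2 w; omega)
    have hch := chain r hmono hle hltab (by have := hw1 w; omega) (by have := hw2 u; omega)
      hma hmb
    have heqa : (⟨CompOf χ a, hma⟩ : PS r χ) = u := by
      refine Subtype.ext ?_
      rw [hw3 u] at ha ⊢
      exact compOf_eq_of_mem ha
    have heqb : (⟨CompOf χ b, hmb⟩ : PS r χ) = w := by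
      refine Subtype.ext ?_
      rw [hw3 w] at hb ⊢
      exact compOf_eq_of_mem hb
    rwa [heqa, heqb] at hch
  -- the TransGen equivalence transported through e
  have hK4 : ∀ u w : PS r χ,
      Relation.TransGen (RI r χ) u w ↔ Relation.TransGen I' (e u) (e w) := by
    intro u w
    constructor
    · refine Relation.TransGen.lift e (fun u w hichi => ?_) u w
      obtain ⟨hlt, hd1, hd2⟩ := hK2 u w hichi
      refine ⟨?_, (hK1 u w).2 ⟨hd1, hd2⟩⟩
      have h1 := hdeg' u
      have h2 := hdeg' w
      have : (S.deg (e u) : ℤ) < (S.deg (e w) : ℤ) := by omega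
      exact_mod_cast this
    · intro h
      have hedge : ∀ p q, I' p q → Relation.TransGen (RI r χ) (e.symm p) (e.symm q) := by
        intro p q hpq
        obtain ⟨hltdeg, hne⟩ := hpq
        have h1 := hdeg' (e.symm p)
        have h2 := hdeg' (e.symm q)
        rw [Equiv.apply_symm_apply] at h1 h2
        have hlt : χ (wit (e.symm q)) < χ (wit (e.symm p)) := by
          have : (S.deg p : ℤ) < (S.deg q : ℤ) := by exact_mod_cast hltdeg
          omega
        have hne' : (JP (e (e.symm p)) ∩ JP (e (e.symm q))).Nonempty := by
          simpa using hne
        obtain ⟨hd1, hd2⟩ := (hK1 _ _).1 hne'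
        exact hK3 _ _ hlt hd1 hd2
      have h2 : Relation.TransGen (RI r χ) (e.symm (e u)) (e.symm (e w)) :=
        Relation.TransGen.lift' e.symm hedge _ _ h
      simpa using h2
  refine ⟨I', fun p q hpq => hpq.1, ?_, JP, ?_, ?_, fun p q _ => ?_⟩
  · -- TransGen S.I ↔ TransGen I'
    intro p q
    rw [← Equiv.apply_symm_apply e p, ← Equiv.apply_symm_apply e q]
    rw [← hTG (e.symm p) (e.symm q)]
    exact hK4 (e.symm p) (e.symm q)
  · -- Icc shape
    intro p
    refine ⟨_, _, ?_, rfl⟩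
    have : (mB (e.symm p) : ℝ) ≤ (MB (e.symm p) : ℝ) := by exact_mod_cast hmBle _
    linarith
  · -- disjointness within a level
    intro p q hpq hdegeq
    by_contra hcon
    rw [← Ne, ← Set.nonempty_iff_ne_empty] at hcon
    have hne' : (JP (e (e.symm p)) ∩ JP (e (e.symm q))).Nonempty := by simpa using hcon
    obtain ⟨hd1, hd2⟩ := (hK1 _ _).1 hne'
    obtain ⟨a, ha, b, hb, he1, he2⟩ := hfind (e.symm p) (e.symm q) hd1 hd2
    have hva := hvalmem (e.symm p) a ha
    have hvb := hvalmem (e.symm q) b hb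
    have hdp := hdeg' (e.symm p)
    have hdq := hdeg' (e.symm q)
    rw [Equiv.apply_symm_apply] at hdp hdq
    have hvv : χ a = χ b := by
      have : (S.deg p : ℤ) = (S.deg q : ℤ) := by exact_mod_cast hdegeq
      omega
    have hcomp : CompOf χ a = CompOf χ b := compOf_eq_of_tc hmono hvv he1 he2
    have : (e.symm p) = (e.symm q) := by
      refine Subtype.ext ?_
      rw [hw3 (e.symm p)] at ha ⊢
      rw [hw3 (e.symm q)] at hb
      rw [← compOf_eq_of_mem ha, hcomp, compOf_eq_of_mem hb]
      exact (hw3 _).symm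
    exact hpq (by simpa using congrArg e this)
  · -- the iff is trivial by definition of I'
    exact ⟨fun h => h.2, fun h => ⟨by assumption, h⟩⟩
end St6

namespace St6

lemma backward {r : ℕ} (hr : 1 ≤ r) (S : IncStruct (r - 1))
    (I' : S.P → S.P → Prop)
    (hlt : ∀ p q, I' p q → S.deg p < S.deg q)
    (hTG' : ∀ p q, Relation.TransGen S.I p q ↔ Relation.TransGen I' p q)
    (J : S.P → Set ℝ)
    (hIcc : ∀ p, ∃ x y : ℝ, x ≤ y ∧ J p = Set.Icc x y)
    (hdisj : ∀ p q, p ≠ q → S.deg p = S.deg q → J p ∩ J q = ∅)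
    (hiff : ∀ p q, S.deg p < S.deg q → (I' p q ↔ (J p ∩ J q).Nonempty)) :
    ∃ χ : (Fin 2 → ℕ) → ℤ, IsCharFun r 2 χ ∧ EquivToSchi r χ S := by
  classical
  have finP := S.finP
  rcases isEmpty_or_nonempty S.P with hemp | hne
  · refine ⟨0, ⟨fun a => ⟨le_refl 0, by positivity⟩, by simp, fun a b _ => le_refl 0⟩, ?_⟩
    have hPe : IsEmpty {p : Set Pt // p ∈ Pchi r (0 : Pt → ℤ)} := by
      refine ⟨fun u => ?_⟩
      obtain ⟨a, h1, _, _⟩ := u.2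
      simp at h1
    exact ⟨Equiv.equivOfIsEmpty _ _, fun p => (hPe.false p).elim,
      fun p q => (hPe.false p).elim⟩
  haveI : Fintype S.P := Fintype.ofFinite _
  choose xE yE hxy hJ using hIcc
  have hvr : ∀ p : S.P, 1 ≤ vv S p ∧ vv S p < r := by
    intro p
    have h1 := S.deg_pos p
    have h2 := S.deg_le p
    unfold vv
    omega
  have hdegvv : ∀ p q : S.P, (vv S p = vv S q ↔ S.deg p = S.deg q) := by
    intro p q
    have h1 := S.deg_pos p; have h2 := S.deg_le p
    have h3 := S.deg_pos q; have h4 := S.deg_le q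
    unfold vv
    omega
  have hgapPQ : ∀ p q : S.P, p ≠ q → vv S p = vv S q →
      BB S xE yE p + 2 ≤ AA S xE yE q ∨ BB S xE yE q + 2 ≤ AA S xE yE p := by
    intro p q hne' hvv
    refine gap_of_disj S xE yE hxy p q ?_
    rw [← hJ p, ← hJ q, hdisj p q hne' ((hdegvv p q).1 hvv)]
    exact Set.not_nonempty_empty
  have hanti := chiF_anti S xE yE hxy
  -- canonical points on each component
  have hptP : ∀ p : S.P, ∃ a : Pt, chiF S xE yE a = (vv S p : ℤ) ∧
      tc a = AA S xE yE p ∧ a 1 ≤ a 0 :=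
    fun p => chiF_pt S xE yE hxy (hvr p).1 (hvr p).2 (AA_pos S xE yE p)
      (NN_strict S xE yE hxy rfl (le_refl _) (AA_le_BB S xE yE hxy p))
  choose ptP hpt1 hpt2 hpt3 using hptP
  have hmemP : ∀ p, CompOf (chiF S xE yE) (ptP p) ∈ Pchi r (chiF S xE yE) := by
    intro p
    refine mem_Pchi_compOf r ?_ ?_ <;> rw [hpt1 p]
    · exact_mod_cast (hvr p).1
    · have := (hvr p).2
      omega
  have hvComp : ∀ (p : S.P) {b : Pt}, b ∈ CompOf (chiF S xE yE) (ptP p) →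
      chiF S xE yE b = (vv S p : ℤ) :=
    fun p {b} hb => (val_eq_of_mem hb).trans (hpt1 p)
  have hrangeP : ∀ (p : S.P) {b : Pt}, b ∈ CompOf (chiF S xE yE) (ptP p) →
      AA S xE yE p ≤ tc b ∧ tc b ≤ BB S xE yE p :=
    fun p {b} hb => chiF_range S xE yE hxy hvr hgapPQ p (ptP p) (hpt1 p) (hpt2 p) hb
  have hconnP := fun p => chiF_conn S xE yE hxy hvr p (ptP p) (hpt1 p) (hpt2 p)
  set g : S.P → PS r (chiF S xE yE) := fun p => ⟨CompOf (chiF S xE yE) (ptP p), hmemP p⟩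
    with hg
  have hginj : Function.Injective g := by
    intro p q hgpq
    have hpq : CompOf (chiF S xE yE) (ptP p) = CompOf (chiF S xE yE) (ptP q) :=
      congrArg Subtype.val hgpq
    by_cases hvv : vv S p = vv S q
    · by_contra hne'
      have hmem : ptP q ∈ CompOf (chiF S xE yE) (ptP p) := by
        rw [hpq]; exact mem_compOf_self _ _
      have hr1 := hrangeP p hmem
      rw [hpt2 q] at hr1
      have hAB := AA_le_BB S xE yE hxy p
      have hABq := AA_le_BB S xE yE hxy q
      rcases hgapPQ p q hne' hvv with h | h <;> omega
    · exfalso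
      have hmem : ptP q ∈ CompOf (chiF S xE yE) (ptP p) := by
        rw [hpq]; exact mem_compOf_self _ _
      have hv2 := hvComp p hmem
      rw [hpt1 q] at hv2
      exact hvv (by exact_mod_cast hv2.symm)
  have hgsurj : Function.Surjective g := by
    intro u
    obtain ⟨a, h1, h2, h3⟩ := u.2
    obtain ⟨w, hw1, hw2, hw3⟩ : ∃ w : ℕ, 1 ≤ w ∧ w < r ∧ chiF S xE yE a = (w : ℤ) :=
      ⟨(chiF S xE yE a).toNat, by omega, by omega, by omega⟩
    obtain ⟨q, hq1, hq2, hq3, hreg⟩ := chiF_pres S xE yE hxy a w hw1 hw2 hw3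
    refine ⟨q, Subtype.ext ?_⟩
    have hamem : a ∈ CompOf (chiF S xE yE) (ptP q) := by
      refine hconnP q a ?_ (by omega) (by omega)
      rw [hw3, hq1]
    show CompOf (chiF S xE yE) (ptP q) = u.1
    rw [h3]
    exact (compOf_eq_of_mem hamem).symm
  set eqv : PS r (chiF S xE yE) ≃ S.P := (Equiv.ofBijective g ⟨hginj, hgsurj⟩).symm with heqv
  have hge : ∀ u : PS r (chiF S xE yE), g (eqv u) = u := fun u =>
    (Equiv.ofBijective g ⟨hginj, hgsurj⟩).apply_symm_apply u
  refine ⟨chiF S xE yE, ⟨chiF_bnd S xE yE, chiF_supp S xE yE hxy, hanti⟩, eqv, ?_, ?_⟩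
  · -- degree condition
    intro u a ha
    have hu : u.1 = CompOf (chiF S xE yE) (ptP (eqv u)) :=
      (congrArg Subtype.val (hge u)).symm
    rw [hu] at ha
    rw [hvComp (eqv u) ha]
    have h1 := S.deg_pos (eqv u)
    have h2 := S.deg_le (eqv u)
    unfold vv
    omega
  · -- TransGen condition
    have hedge1 : ∀ p q : S.P, Ichi (chiF S xE yE) (g p).1 (g q).1 →
        Relation.TransGen S.I p q := by
      rintro p q ⟨a, ha, b, hb, hadj, hle, hltv⟩
      have hva := hvComp p ha
      have hvb := hvComp q hb
      have hdeglt : S.deg p < S.deg q := by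
        rw [hva, hvb] at hltv
        have h1 := hvr p; have h2 := hvr q
        have h3 := S.deg_le p; have h5 := S.deg_le q
        have h4 := S.deg_pos p; have h6 := S.deg_pos q
        unfold vv at hltv
        omega
      have hra := hrangeP p ha
      have hrb := hrangeP q hb
      have htadj := tc_adj hadj
      have hJne : (J p ∩ J q).Nonempty := by
        rw [hJ p, hJ q]
        refine (inter_iff S xE yE hxy p q).2 ?_
        obtain ⟨k1, hk1⟩ := AA_even S xE yE p
        obtain ⟨k2, hk2⟩ := BB_even S xE yE p
        obtain ⟨k3, hk3⟩ := AA_even S xE yE q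
        obtain ⟨k4, hk4⟩ := BB_even S xE yE q
        constructor <;> rcases htadj with h | h <;> omega
      exact (hTG' p q).2 (Relation.TransGen.single ((hiff p q hdeglt).2 hJne))
    have hedge2 : ∀ p q : S.P, I' p q →
        Relation.TransGen (RI r (chiF S xE yE)) (g p) (g q) := by
      intro p q h
      have hdeglt := hlt p q h
      have hJne := (hiff p q hdeglt).1 h
      rw [hJ p, hJ q] at hJne
      obtain ⟨hi1, hi2⟩ := (inter_iff S xE yE hxy p q).1 hJne
      have hABp := AA_le_BB S xE yE hxy p
      have hABq := AA_le_BB S xE yE hxy q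
      have hAp := AA_pos S xE yE p
      have hAq := AA_pos S xE yE q
      obtain ⟨za, hza1, hza2, _⟩ := chiF_pt S xE yE hxy (hvr p).1 (hvr p).2
        (show (1:ℤ) ≤ max (AA S xE yE p) (AA S xE yE q) by omega)
        (NN_strict S xE yE hxy rfl (le_max_left _ _) (by omega))
      obtain ⟨zb, hzb1, hzb2, _⟩ := chiF_pt S xE yE hxy (hvr q).1 (hvr q).2
        (show (1:ℤ) ≤ max (AA S xE yE p) (AA S xE yE q) by omega)
        (NN_strict S xE yE hxy rfl (le_max_right _ _) (by omega))
      have hvltq : (vv S q : ℤ) < (vv S p : ℤ) := by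
        have h1 := hvr p; have h2 := hvr q
        have h3 := S.deg_le p; have h5 := S.deg_le q
        have h4 := S.deg_pos p; have h6 := S.deg_pos q
        unfold vv
        omega
      have hltv : chiF S xE yE zb < chiF S xE yE za := by rw [hza1, hzb1]; exact hvltq
      have hlezab : za ≤ zb := le_of_tc_of_lt hanti hltv (by omega) (by omega)
      have hma : CompOf (chiF S xE yE) za ∈ Pchi r (chiF S xE yE) := by
        refine mem_Pchi_compOf r ?_ ?_ <;> rw [hza1]
        · exact_mod_cast (hvr p).1
        · have := (hvr p).2
          omega
      have hmb : CompOf (chiF S xE yE) zb ∈ Pchi r (chiF S xE yE) := by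
        refine mem_Pchi_compOf r ?_ ?_ <;> rw [hzb1]
        · exact_mod_cast (hvr q).1
        · have := (hvr q).2
          omega
      have hch := chain r hanti hlezab hltv
        (by rw [hzb1]; exact_mod_cast (hvr q).1)
        (by rw [hza1]; have := (hvr p).2; omega) hma hmb
      have heqa : (⟨CompOf (chiF S xE yE) za, hma⟩ : PS r (chiF S xE yE)) = g p := by
        refine Subtype.ext ?_
        show CompOf (chiF S xE yE) za = CompOf (chiF S xE yE) (ptP p)
        exact compOf_eq_of_mem (hconnP p za hza1 (by omega) (by omega))
      have heqb : (⟨CompOf (chiF S xE yE) zb, hmb⟩ : PS r (chiF S xE yE)) = g q := by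
        refine Subtype.ext ?_
        show CompOf (chiF S xE yE) zb = CompOf (chiF S xE yE) (ptP q)
        exact compOf_eq_of_mem (hconnP q zb hzb1 (by omega) (by omega))
      rwa [heqa, heqb] at hch
    intro u₁ u₂
    constructor
    · intro h
      refine Relation.TransGen.lift' (f := fun u : PS r (chiF S xE yE) => eqv u)
        (fun w₁ w₂ hRi => ?_) _ _ h
      exact Relation.TransGen.lift' (f := id) (fun a b hab => Relation.TransGen.single hab) _ _
        (hedge1 (eqv w₁) (eqv w₂) (by rw [hge w₁, hge w₂]; exact hRi))
    · intro h
      have h' := (hTG' _ _).1 h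
      have h2 : Relation.TransGen (RI r (chiF S xE yE)) (g (eqv u₁)) (g (eqv u₂)) :=
        Relation.TransGen.lift' (f := g) hedge2 _ _ h'
      rwa [hge u₁, hge u₂] at h2

end St6


/-- Let `r ≥ 1` and let `S` be a rank `r−1` incidence structure.  There is a
characteristic function `χ : ℕ² → ℤ` with parameters `r, d = 2` such that `S_χ` is equivalent
to `S`, iff `S` is equivalent to a rank `r−1` incidence structure `(P₁, …, P_{r−1}, I′)` for
which there exist nonempty closed bounded intervals `J_p ⊆ ℝ` with `J_p ∩ J_q = ∅` for
distinct `p ≠ q` in the same part, and such that for `deg p < deg q` one has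
`(p, q) ∈ I′` iff `J_p ∩ J_q ≠ ∅`. -/
theorem statement6 {r : ℕ} (hr : 1 ≤ r) (S : IncStruct (r - 1)) :
    (∃ χ : (Fin 2 → ℕ) → ℤ, IsCharFun r 2 χ ∧ EquivToSchi r χ S) ↔
      ∃ I' : S.P → S.P → Prop,
        (∀ p q, I' p q → S.deg p < S.deg q) ∧
        (∀ p q, Relation.TransGen S.I p q ↔ Relation.TransGen I' p q) ∧
        ∃ J : S.P → Set ℝ,
          (∀ p, ∃ x y : ℝ, x ≤ y ∧ J p = Set.Icc x y) ∧
          (∀ p q, p ≠ q → S.deg p = S.deg q → J p ∩ J q = ∅) ∧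
          (∀ p q, S.deg p < S.deg q → (I' p q ↔ (J p ∩ J q).Nonempty)) := by
  constructor
  · rintro ⟨χ, hch, heq⟩
    exact St6.forward hr S χ hch heq
  · rintro ⟨I', h1, h2, J, h3, h4, h5⟩
    exact St6.backward hr S I' h1 h2 J h3 h4 h5
end

section
/- There is a ring isomorphism ℤ[x₁, y₁, x₂, y₂, a₁, b₁, a₂, b₂]/(y₁ − a₁x₁ − b₁, y₂ − a₁x₂ − b₁, y₁ − a₂x₁ − b₂, y₂ − a₂x₂ − b₂) ≅ ℤ[x, y, u, v, w]/(x·y). -/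
open MvPolynomial

noncomputable section

abbrev I8 : Ideal (MvPolynomial (Fin 8) ℤ) := Ideal.span
  ({X 1 - X 4 * X 0 - X 5, X 3 - X 4 * X 2 - X 5,
    X 1 - X 6 * X 0 - X 7, X 3 - X 6 * X 2 - X 7} : Set (MvPolynomial (Fin 8) ℤ))

abbrev I5 : Ideal (MvPolynomial (Fin 5) ℤ) := Ideal.span
  ({X 0 * X 1} : Set (MvPolynomial (Fin 5) ℤ))

def v8 : Fin 8 → MvPolynomial (Fin 5) ℤ
  | 0 => X 2
  | 1 => X 4 * X 2 + X 3
  | 2 => X 2 + X 1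
  | 3 => X 4 * (X 2 + X 1) + X 3
  | 4 => X 4
  | 5 => X 3
  | 6 => X 4 - X 0
  | 7 => X 0 * X 2 + X 3

def v5 : Fin 5 → MvPolynomial (Fin 8) ℤ
  | 0 => X 4 - X 6
  | 1 => X 2 - X 0
  | 2 => X 0
  | 3 => X 5
  | 4 => X 4

def φ : MvPolynomial (Fin 8) ℤ →+* MvPolynomial (Fin 5) ℤ := (aeval v8).toRingHom

def ψ : MvPolynomial (Fin 5) ℤ →+* MvPolynomial (Fin 8) ℤ := (aeval v5).toRingHom

lemma g1 : (X 1 - X 4 * X 0 - X 5 : MvPolynomial (Fin 8) ℤ) ∈ I8 :=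
  Ideal.subset_span (by simp)
lemma g2 : (X 3 - X 4 * X 2 - X 5 : MvPolynomial (Fin 8) ℤ) ∈ I8 :=
  Ideal.subset_span (by simp)
lemma g3 : (X 1 - X 6 * X 0 - X 7 : MvPolynomial (Fin 8) ℤ) ∈ I8 :=
  Ideal.subset_span (by simp)
lemma g4 : (X 3 - X 6 * X 2 - X 7 : MvPolynomial (Fin 8) ℤ) ∈ I8 :=
  Ideal.subset_span (by simp)

lemma xy5 : (X 0 * X 1 : MvPolynomial (Fin 5) ℤ) ∈ I5 := Ideal.subset_span (by simp)

def F : MvPolynomial (Fin 8) ℤ ⧸ I8 →+* MvPolynomial (Fin 5) ℤ ⧸ I5 :=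
  Ideal.Quotient.lift I8 ((Ideal.Quotient.mk I5).comp φ) (fun a ha => by
    refine RingHom.mem_ker.mp (Ideal.span_le.mpr ?_ ha)
    rintro p hp
    simp only [Set.mem_insert_iff, Set.mem_singleton_iff] at hp
    rcases hp with rfl | rfl | rfl | rfl <;>
      · rw [SetLike.mem_coe, RingHom.mem_ker, RingHom.comp_apply,
          Ideal.Quotient.eq_zero_iff_mem]
        simp only [φ, AlgHom.toRingHom_eq_coe, RingHom.coe_coe, map_sub, map_mul,
          aeval_X, v8]
        rw [Ideal.mem_span_singleton]
        first
        | (refine ⟨0, ?_⟩; ring1)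
        | (refine ⟨1, ?_⟩; ring1))

def G : MvPolynomial (Fin 5) ℤ ⧸ I5 →+* MvPolynomial (Fin 8) ℤ ⧸ I8 :=
  Ideal.Quotient.lift I5 ((Ideal.Quotient.mk I8).comp ψ) (fun a ha => by
    refine RingHom.mem_ker.mp (Ideal.span_le.mpr ?_ ha)
    rintro p hp
    simp only [Set.mem_singleton_iff] at hp
    subst hp
    rw [SetLike.mem_coe, RingHom.mem_ker, RingHom.comp_apply,
      Ideal.Quotient.eq_zero_iff_mem]
    simp only [ψ, AlgHom.toRingHom_eq_coe, RingHom.coe_coe, map_mul, aeval_X, v5]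
    have h := Ideal.add_mem _ (Ideal.sub_mem _ (Ideal.sub_mem _ g1 g2) g3) g4
    convert h using 1; ring)

lemma mkF (p : MvPolynomial (Fin 8) ℤ) :
    F (Ideal.Quotient.mk I8 p) = Ideal.Quotient.mk I5 (φ p) := rfl

lemma mkG (p : MvPolynomial (Fin 5) ℤ) :
    G (Ideal.Quotient.mk I5 p) = Ideal.Quotient.mk I8 (ψ p) := rfl

lemma fin8_0 (h : 0 < 8) : (⟨0, h⟩ : Fin 8) = 0 := rfl
lemma fin8_1 (h : 1 < 8) : (⟨1, h⟩ : Fin 8) = 1 := rfl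
lemma fin8_2 (h : 2 < 8) : (⟨2, h⟩ : Fin 8) = 2 := rfl
lemma fin8_3 (h : 3 < 8) : (⟨3, h⟩ : Fin 8) = 3 := rfl
lemma fin8_4 (h : 4 < 8) : (⟨4, h⟩ : Fin 8) = 4 := rfl
lemma fin8_5 (h : 5 < 8) : (⟨5, h⟩ : Fin 8) = 5 := rfl
lemma fin8_6 (h : 6 < 8) : (⟨6, h⟩ : Fin 8) = 6 := rfl
lemma fin8_7 (h : 7 < 8) : (⟨7, h⟩ : Fin 8) = 7 := rfl
lemma fin5_0 (h : 0 < 5) : (⟨0, h⟩ : Fin 5) = 0 := rfl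
lemma fin5_1 (h : 1 < 5) : (⟨1, h⟩ : Fin 5) = 1 := rfl
lemma fin5_2 (h : 2 < 5) : (⟨2, h⟩ : Fin 5) = 2 := rfl
lemma fin5_3 (h : 3 < 5) : (⟨3, h⟩ : Fin 5) = 3 := rfl
lemma fin5_4 (h : 4 < 5) : (⟨4, h⟩ : Fin 5) = 4 := rfl

lemma key8 : ∀ i : Fin 8, ψ (φ (X i)) - X i ∈ I8 := by
  have comp : ∀ i : Fin 8, ψ (φ (X i)) = ψ (v8 i) := fun i => by
    simp [φ, aeval_X]
  intro i
  rw [comp]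
  have e : ∀ p : MvPolynomial (Fin 5) ℤ, ψ p = aeval v5 p := fun p => rfl
  rw [e]
  fin_cases i <;>
    · simp only [v8, v5, map_add, map_mul, map_sub, aeval_X, fin8_0, fin8_1, fin8_2, fin8_3, fin8_4, fin8_5, fin8_6, fin8_7, fin5_0, fin5_1, fin5_2, fin5_3, fin5_4]
      first
      | (convert Ideal.zero_mem I8 using 1; ring1)
      | (convert neg_mem g1 using 1; ring1)
      | (convert neg_mem g2 using 1; ring1)
      | (convert sub_mem g3 g1 using 1; ring1)

lemma key5 : ∀ i : Fin 5, φ (ψ (X i)) = X i := by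
  have comp : ∀ i : Fin 5, φ (ψ (X i)) = φ (v5 i) := fun i => by
    simp [ψ, aeval_X]
  intro i
  rw [comp]
  have e : ∀ p : MvPolynomial (Fin 8) ℤ, φ p = aeval v8 p := fun p => rfl
  rw [e]
  fin_cases i <;>
    simp only [v8, v5, map_add, map_mul, map_sub, aeval_X, fin8_0, fin8_1, fin8_2,
      fin8_3, fin8_4, fin8_5, fin8_6, fin8_7, fin5_0, fin5_1, fin5_2, fin5_3, fin5_4] <;>
    ring1

lemma FG : F.comp G = RingHom.id _ := by
  refine Ideal.Quotient.ringHom_ext ?_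
  refine MvPolynomial.ringHom_ext' (RingHom.ext_int _ _) (fun i => ?_)
  simp only [RingHom.comp_apply, RingHom.id_apply, mkG, mkF]
  exact congrArg _ (key5 i)

lemma GF : G.comp F = RingHom.id _ := by
  refine Ideal.Quotient.ringHom_ext ?_
  refine MvPolynomial.ringHom_ext' (RingHom.ext_int _ _) (fun i => ?_)
  simp only [RingHom.comp_apply, RingHom.id_apply, mkF, mkG]
  rw [Ideal.Quotient.eq]
  exact key8 i

end

/-- There is a ring isomorphism
`ℤ[x₁,y₁,x₂,y₂,a₁,b₁,a₂,b₂]/(y₁−a₁x₁−b₁, y₂−a₁x₂−b₁, y₁−a₂x₁−b₂, y₂−a₂x₂−b₂)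
  ≅ ℤ[x,y,u,v,w]/(x·y)`.
Here the variables `X 0, …, X 7` of the left-hand side are `x₁, y₁, x₂, y₂, a₁, b₁, a₂, b₂`
respectively, and on the right-hand side `X 0 = x`, `X 1 = y`, `X 2 = u`, `X 3 = v`,
`X 4 = w`. -/
theorem statement10 :
    Nonempty
      ((MvPolynomial (Fin 8) ℤ ⧸ Ideal.span
          ({X 1 - X 4 * X 0 - X 5,
            X 3 - X 4 * X 2 - X 5,
            X 1 - X 6 * X 0 - X 7,
            X 3 - X 6 * X 2 - X 7} : Set (MvPolynomial (Fin 8) ℤ))) ≃+*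
        (MvPolynomial (Fin 5) ℤ ⧸ Ideal.span
          ({X 0 * X 1} : Set (MvPolynomial (Fin 5) ℤ)))) := by
  exact ⟨RingEquiv.ofRingHom F G FG GF⟩
end

section
/- Let m ≥ 3 be an integer and let G = (V, E) be a finite simple graph. Then there exists a family (K_v)_{v ∈ V} of nonempty path-connected compact subsets of ℝ^m such that for all distinct v, w ∈ V one has K_v ∩ K_w ≠ ∅ if and only if {v, w} ∈ E; that is, G is the intersection graph of a family of nonempty path-connected compact subsets of ℝ^m. -/
set_option maxRecDepth 4000

open Finset in
lemma vand4 {t lam : Fin 4 → ℝ} (ht : Function.Injective t)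
    (h : ∀ k : Fin 4, ∑ j, lam j * t j ^ (k : ℕ) = 0) : lam = 0 := by
  apply Matrix.eq_zero_of_mulVec_eq_zero (M := (Matrix.vandermonde t).transpose)
  · rw [Matrix.det_transpose]
    exact Matrix.det_vandermonde_ne_zero_iff.mpr ht
  · funext k
    simpa [Matrix.mulVec, dotProduct, Matrix.vandermonde, mul_comm] using h k

lemma isCompact_seg {m : ℕ} (x y : EuclideanSpace ℝ (Fin m)) : IsCompact (segment ℝ x y) := by
  rw [segment_eq_image]
  exact isCompact_Icc.image
    (((continuous_const.sub continuous_id).smul continuous_const).add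
      (continuous_id.smul continuous_const))

/-- moment curve -/
def mc (m : ℕ) (t : ℝ) : EuclideanSpace ℝ (Fin m) :=
  WithLp.toLp 2 fun i => if (i : ℕ) = 0 then t else if (i : ℕ) = 1 then t ^ 2
    else if (i : ℕ) = 2 then t ^ 3 else 0

lemma mc_inj {m : ℕ} (hm : 3 ≤ m) : Function.Injective (mc m) := by
  intro a b h
  have := congrArg (fun x : EuclideanSpace ℝ (Fin m) => x ⟨0, by omega⟩) h
  simpa [mc] using this

lemma mc_coords {m : ℕ} (hm : 3 ≤ m) {a b p q s u : ℝ}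
    (h : s • mc m a + (1 - s) • mc m b = u • mc m p + (1 - u) • mc m q) :
    (s * a + (1 - s) * b = u * p + (1 - u) * q) ∧
    (s * a ^ 2 + (1 - s) * b ^ 2 = u * p ^ 2 + (1 - u) * q ^ 2) ∧
    (s * a ^ 3 + (1 - s) * b ^ 3 = u * p ^ 3 + (1 - u) * q ^ 3) := by
  refine ⟨?_, ?_, ?_⟩
  · have := congrArg (fun x : EuclideanSpace ℝ (Fin m) => x ⟨0, by omega⟩) h; simpa [mc] using this
  · have := congrArg (fun x : EuclideanSpace ℝ (Fin m) => x ⟨1, by omega⟩) h; simpa [mc] using this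
  · have := congrArg (fun x : EuclideanSpace ℝ (Fin m) => x ⟨2, by omega⟩) h; simpa [mc] using this

lemma inj4 {a b p q : ℝ} (hab : a ≠ b) (hap : a ≠ p) (haq : a ≠ q)
    (hbp : b ≠ p) (hbq : b ≠ q) (hpq : p ≠ q) :
    Function.Injective (![a, b, p, q] : Fin 4 → ℝ) := by
  intro i j hij
  fin_cases i <;> fin_cases j <;> simp_all

/-- two chords of the moment curve with 4 distinct parameters are disjoint (even the lines). -/
lemma lemA {m : ℕ} (hm : 3 ≤ m) {a b p q s u : ℝ}
    (hab : a ≠ b) (hap : a ≠ p) (haq : a ≠ q) (hbp : b ≠ p) (hbq : b ≠ q) (hpq : p ≠ q)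
    (h : s • mc m a + (1 - s) • mc m b = u • mc m p + (1 - u) • mc m q) : False := by
  obtain ⟨e1, e2, e3⟩ := mc_coords hm h
  have h0 : (![s, 1 - s, -u, u - 1] : Fin 4 → ℝ) = 0 := by
    apply vand4 (inj4 hab hap haq hbp hbq hpq)
    · intro k
      fin_cases k <;> simp [Fin.sum_univ_four]
      · ring
      · linear_combination e1
      · linear_combination e2
      · linear_combination e3
  have h1 := congrFun h0 0
  have h2 := congrFun h0 1
  simp at h1 h2
  linarith

/-- a point of the moment curve is not on a chord with other parameters -/
lemma lemC {m : ℕ} (hm : 3 ≤ m) {a b p u : ℝ}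
    (hab : a ≠ b) (hap : a ≠ p) (hbp : b ≠ p)
    (h : mc m a = u • mc m b + (1 - u) • mc m p) : False := by
  have h' : (1 : ℝ) • mc m a + (1 - 1 : ℝ) • mc m a = u • mc m b + (1 - u) • mc m p := by
    simpa using h
  obtain ⟨e1, e2, e3⟩ := mc_coords hm h'
  obtain ⟨d, hda, hdb, hdp⟩ : ∃ d : ℝ, a ≠ d ∧ b ≠ d ∧ p ≠ d :=
    ⟨max a (max b p) + 1,
      ne_of_lt (by have := le_max_left a (max b p); linarith),
      ne_of_lt (by have := le_trans (le_max_left b p) (le_max_right a (max b p)); linarith),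
      ne_of_lt (by have := le_trans (le_max_right b p) (le_max_right a (max b p)); linarith)⟩
  have h0 : (![1, -u, u - 1, 0] : Fin 4 → ℝ) = 0 := by
    apply vand4 (inj4 hab hap hda hbp hdb hdp)
    · intro k
      fin_cases k <;> simp [Fin.sum_univ_four]
      · ring
      · linear_combination e1
      · linear_combination e2
      · linear_combination e3
  have h1 := congrFun h0 0
  simp at h1

/-- Let `m ≥ 3` and let `G` be a finite simple graph.  Then `G` is the
intersection graph of a family of nonempty path-connected compact subsets of `ℝ^m`:
there exist such sets `K_v`, one per vertex, with `K_v ∩ K_w ≠ ∅` iff `{v,w}` is an edge,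
for all distinct vertices `v, w`. -/
theorem statement12 {m : ℕ} (hm : 3 ≤ m) {V : Type} [Fintype V] (G : SimpleGraph V) :
    ∃ K : V → Set (EuclideanSpace ℝ (Fin m)),
      (∀ v, (K v).Nonempty ∧ IsPathConnected (K v) ∧ IsCompact (K v)) ∧
      ∀ v w, v ≠ w → ((K v ∩ K w).Nonempty ↔ G.Adj v w) := by
  classical
  set ι : V ⊕ Sym2 V → ℝ := fun x => ((Fintype.equivFin (V ⊕ Sym2 V)) x : ℝ) with hιdef
  have hι : Function.Injective ι :=
    fun x y h => (Fintype.equivFin (V ⊕ Sym2 V)).injective (Fin.val_injective (Nat.cast_injective h))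
  set P : V → EuclideanSpace ℝ (Fin m) := fun v => mc m (ι (Sum.inl v)) with hP
  set Q : Sym2 V → EuclideanSpace ℝ (Fin m) := fun e => mc m (ι (Sum.inr e)) with hQ
  set S : V → Finset (Sym2 V) :=
    fun v => Finset.univ.filter (fun e => e ∈ G.edgeSet ∧ v ∈ e) with hS
  set K : V → Set (EuclideanSpace ℝ (Fin m)) :=
    fun v => {P v} ∪ ⋃ e ∈ S v, segment ℝ (P v) (Q e) with hK
  refine ⟨K, fun v => ⟨⟨P v, Or.inl rfl⟩, ?_, ?_⟩, ?_⟩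
  · -- path connected
    refine ⟨P v, Or.inl rfl, ?_⟩
    intro y hy
    rcases hy with hy | hy
    · rw [Set.mem_singleton_iff] at hy
      subst hy
      exact JoinedIn.refl (Or.inl rfl)
    · simp only [Set.mem_iUnion] at hy
      obtain ⟨e, he, hye⟩ := hy
      have hseg : IsPathConnected (segment ℝ (P v) (Q e)) :=
        (convex_segment _ _).isPathConnected ⟨_, left_mem_segment ℝ _ _⟩
      have := hseg.joinedIn (P v) (left_mem_segment ℝ _ _) y hye
      exact this.mono (by
        intro z hz
        exact Or.inr (Set.mem_iUnion.mpr ⟨e, Set.mem_iUnion.mpr ⟨he, hz⟩⟩))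
  · -- compact
    exact isCompact_singleton.union ((S v).isCompact_biUnion fun e _ => isCompact_seg _ _)
  · intro v w hvw
    constructor
    · rintro ⟨x, hxv, hxw⟩
      -- unpack memberships
      have key : ∀ y z : V, y ≠ z → ∀ x, x ∈ K y → x ∈ K z →
          (x = P y ∨ ∃ e ∈ S y, x ∈ segment ℝ (P y) (Q e)) := by
        intro y z _ x hx _
        rcases hx with hx | hx
        · exact Or.inl hx
        · simp only [Set.mem_iUnion] at hx
          obtain ⟨e, he, hxe⟩ := hx
          exact Or.inr ⟨e, he, hxe⟩
      have hxv' := key v w hvw x hxv hxw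
      have hxw' := key w v (Ne.symm hvw) x hxw hxv
      -- helper: convert segment membership into affine combination
      have hseg : ∀ (A B : ℝ) x, x ∈ segment ℝ (mc m A) (mc m B) →
          ∃ s : ℝ, x = s • mc m A + (1 - s) • mc m B := by
        intro A B x hx
        obtain ⟨s, t, _, _, hst, hx⟩ := hx
        exact ⟨s, by rw [← hx]; congr 1; rw [show t = 1 - s by linarith]⟩
      rcases hxv' with hxv' | ⟨e, he, hxe⟩ <;> rcases hxw' with hxw' | ⟨f, hf, hxf⟩
      · exact absurd (Sum.inl_injective (hι (mc_inj hm (hxv'.symm.trans hxw')))) hvw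
      · -- x = P v lies on segment of w: contradiction
        exfalso
        obtain ⟨u, hu⟩ := hseg _ _ x hxf
        rw [hxv'] at hu
        exact lemC hm (fun hc => hvw (Sum.inl_injective (hι hc)))
          (fun hc => Sum.inl_ne_inr (hι hc)) (fun hc => Sum.inl_ne_inr (hι hc)) hu
      · exfalso
        obtain ⟨u, hu⟩ := hseg _ _ x hxe
        rw [hxw'] at hu
        exact lemC hm (fun hc => hvw (Sum.inl_injective (hι hc)).symm)
          (fun hc => Sum.inl_ne_inr (hι hc)) (fun hc => Sum.inl_ne_inr (hι hc)) hu
      · -- both on segments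
        by_cases hef : e = f
        · subst hef
          simp only [hS, Finset.mem_filter] at he hf
          have hve : v ∈ e := he.2.2
          have hwe : w ∈ e := hf.2.2
          have : e = s(v, w) := (Sym2.mem_and_mem_iff hvw).mp ⟨hve, hwe⟩
          rw [this] at he
          exact G.mem_edgeSet.mp he.2.1
        · exfalso
          obtain ⟨s1, hs1⟩ := hseg _ _ x hxe
          obtain ⟨s2, hs2⟩ := hseg _ _ x hxf
          refine lemA hm (a := ι (Sum.inl v)) (b := ι (Sum.inr e))
            (p := ι (Sum.inl w)) (q := ι (Sum.inr f))
            (fun hc => Sum.inl_ne_inr (hι hc))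
            (fun hc => hvw (Sum.inl_injective (hι hc)))
            (fun hc => Sum.inl_ne_inr (hι hc))
            (fun hc => Sum.inr_ne_inl (hι hc))
            (fun hc => hef (Sum.inr_injective (hι hc)))
            (fun hc => Sum.inl_ne_inr (hι hc))
            (hs1.symm.trans hs2)
    · intro hadj
      refine ⟨Q s(v, w), ?_, ?_⟩
      · refine Or.inr (Set.mem_iUnion.mpr ⟨s(v, w), Set.mem_iUnion.mpr ⟨?_, right_mem_segment ℝ _ _⟩⟩)
        simp [hS, G.mem_edgeSet.mpr hadj]
      · refine Or.inr (Set.mem_iUnion.mpr ⟨s(v, w), Set.mem_iUnion.mpr ⟨?_, right_mem_segment ℝ _ _⟩⟩)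
        simp [hS, G.mem_edgeSet.mpr hadj, Sym2.mem_mk_right]
end
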